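/- arXiv:1308.4229 — 9 statements merged into one kernel-verified Lean document; each statement's English description precedes it below -/
import Mathlib

section
/- An element ω ∈ K̃ \ K is fixed under the Möbius action by some non-scalar matrix of GL₂(A) if and only if there exist s, t ∈ A with t ≠ 0 such that ω = (ε + s)/t and (ε^q + s)(ε + s) = t·t' for some t' ∈ A. (This is the algebraic form of Theorem A/Theorem 1.4: elliptic elements are exactly those of this shape.) -/
open Matrix Polynomial

/-- The Möbius action of a `2 × 2` matrix over `A` on elements of a field extension. -/
noncomputable def mob {A Kt : Type*} [CommRing A] [Field Kt] [Algebra A Kt]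
    (M : Matrix (Fin 2) (Fin 2) A) (ω : Kt) : Kt :=
  (algebraMap A Kt (M 0 0) * ω + algebraMap A Kt (M 0 1)) /
    (algebraMap A Kt (M 1 0) * ω + algebraMap A Kt (M 1 1))

/-- **Theorem A / Theorem 1.4.** An element `ω ∈ K̃ \ K` is fixed by some non-scalar
matrix of `GL₂(A)` under the Möbius action if and only if `ω = (ε + s)/t` with
`s, t ∈ A`, `t ≠ 0`, and `(ε^q + s)(ε + s) = t·t'` for some `t' ∈ A`. -/
theorem stmt_0 (Fq : Type*) [Field Fq] [Fintype Fq] (q : ℕ) (hq : Fintype.card Fq = q)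
    (A : Type*) [CommRing A] [IsDomain A] [IsDedekindDomain A] [Algebra Fq A]
    (K : Type*) [Field K] [Algebra A K] [IsFractionRing A K]
    (hunits : ∀ u : Aˣ, ∃ α : Fqˣ, algebraMap Fq A (α : Fq) = (u : A))
    (halg : ∀ a : A, IsAlgebraic Fq a → ∃ α : Fq, algebraMap Fq A α = a)
    (Kt : Type*) [Field Kt] [Algebra K Kt] [Algebra A Kt] [IsScalarTower A K Kt]
    (ε : Kt) (hε1 : ε ∉ Set.range (algebraMap K Kt)) (hε2 : ε ^ q ^ 2 = ε)
    (hε3 : ε ^ q ≠ ε) (hgen : Algebra.adjoin K {ε} = ⊤)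
    (hAt : Algebra.adjoin A {ε} = integralClosure A Kt)
    (hAtunits : ∀ x y : Kt, x ∈ Algebra.adjoin A {ε} → y ∈ Algebra.adjoin A {ε} →
      x * y = 1 → x ^ q ^ 2 = x)
    (ω : Kt) (hω : ω ∉ Set.range (algebraMap K Kt)) :
    (∃ M : GL (Fin 2) A,
        (¬ ∃ α : A, (↑M : Matrix (Fin 2) (Fin 2) A) = α • (1 : Matrix (Fin 2) (Fin 2) A)) ∧
        mob (↑M : Matrix (Fin 2) (Fin 2) A) ω = ω) ↔
      ∃ s t : A, t ≠ 0 ∧ ω = (ε + algebraMap A Kt s) / algebraMap A Kt t ∧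
        ∃ t' : A, (ε ^ q + algebraMap A Kt s) * (ε + algebraMap A Kt s) =
          algebraMap A Kt t * algebraMap A Kt t' := by
  classical
  -- injectivity facts
  have hAK : Function.Injective (algebraMap A K) := IsFractionRing.injective A K
  have hKKt : Function.Injective (algebraMap K Kt) := (algebraMap K Kt).injective
  have htow : ∀ a : A, algebraMap A Kt a = algebraMap K Kt (algebraMap A K a) :=
    fun a => IsScalarTower.algebraMap_apply A K Kt a
  have hAKt : Function.Injective (algebraMap A Kt) := by
    intro a b h; apply hAK; apply hKKt; rw [← htow, ← htow, h]
  -- characteristic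
  set p := ringChar Fq with hpdef
  haveI hchFq : CharP Fq p := ringChar.charP Fq
  obtain ⟨n, hp, hqpn⟩ := FiniteField.card Fq p
  rw [hq] at hqpn
  haveI hpF : Fact p.Prime := ⟨hp⟩
  haveI hchKt : CharP Kt p := charP_of_injective_ringHom
    (f := (algebraMap A Kt).comp (algebraMap Fq A))
    (by rw [RingHom.coe_comp]; exact hAKt.comp (algebraMap Fq A).injective) p
  haveI hchK : CharP K p := charP_of_injective_ringHom
    (f := (algebraMap A K).comp (algebraMap Fq A))
    (by rw [RingHom.coe_comp]; exact hAK.comp (algebraMap Fq A).injective) p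
  have hfrobKt : ∀ x y : Kt, (x + y) ^ q = x ^ q + y ^ q := by
    intro x y; rw [hqpn]; exact add_pow_char_pow x y p n
  have hfrobK : ∀ x y : K, (x + y) ^ q = x ^ q + y ^ q := by
    intro x y; rw [hqpn]; exact add_pow_char_pow x y p n
  have hq2 : 2 ≤ q := hq ▸ Fintype.one_lt_card
  have hq0 : q ≠ 0 := by omega
  have hq4 : 4 ≤ q ^ 2 := by rw [sq]; exact Nat.mul_le_mul hq2 hq2
  have hnegKt : ∀ x : Kt, (-x) ^ q = -(x ^ q) := by
    intro x
    have h : x ^ q + (-x) ^ q = 0 := by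
      rw [← hfrobKt, add_neg_cancel, zero_pow hq0]
    exact eq_neg_of_add_eq_zero_right h
  have hnegK : ∀ x : K, (-x) ^ q = -(x ^ q) := by
    intro x
    have h : x ^ q + (-x) ^ q = 0 := by
      rw [← hfrobK, add_neg_cancel, zero_pow hq0]
    exact eq_neg_of_add_eq_zero_right h
  -- basic facts about ε
  have hε0 : ε ≠ 0 := fun h => hε1 ⟨0, by simp [h]⟩
  have hεq0 : ε ^ q ≠ 0 := pow_ne_zero _ hε0
  have hεqq : (ε ^ q) ^ q = ε := by
    rw [← pow_mul, ← sq, hε2]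
  have hτq : (ε + ε ^ q) ^ q = ε + ε ^ q := by
    rw [hfrobKt, hεqq]; ring
  have hνq : (ε * ε ^ q) ^ q = ε * ε ^ q := by
    rw [mul_pow, hεqq]; ring
  -- counting lemma: every root of X^q - X is in the image of Fq
  have hL1 : ∀ z : Kt, z ^ q = z → ∃ α : Fq, algebraMap A Kt (algebraMap Fq A α) = z := by
    intro z hz
    by_contra hcon
    push_neg at hcon
    have hPne : (X ^ q - X : Polynomial Kt) ≠ 0 := by
      intro h
      have h1 : (X ^ q - X : Polynomial Kt).coeff q = 1 := by
        rw [coeff_sub, coeff_X_pow, if_pos rfl, coeff_X, if_neg (by omega)]; ring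
      rw [h] at h1; simp at h1
    have hroots : ∀ w : Kt, w ^ q = w → w ∈ (X ^ q - X : Polynomial Kt).roots := by
      intro w hw
      rw [mem_roots hPne]
      simp [IsRoot, hw]
    set Sf : Finset Kt := Finset.univ.image (fun α : Fq => algebraMap A Kt (algebraMap Fq A α))
      with hSf
    have hzS : z ∉ Sf := by
      intro hmem
      obtain ⟨α, _, hα⟩ := Finset.mem_image.mp hmem
      exact hcon α hα
    have hsub : insert z Sf ⊆ (X ^ q - X : Polynomial Kt).roots.toFinset := by
      intro w hw
      rw [Multiset.mem_toFinset]
      rcases Finset.mem_insert.mp hw with h | h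
      · exact h ▸ hroots z hz
      · obtain ⟨α, _, rfl⟩ := Finset.mem_image.mp h
        refine hroots _ ?_
        rw [← map_pow, ← map_pow]
        congr 1
        congr 1
        rw [← hq]
        exact FiniteField.pow_card α
    have hcard1 : (insert z Sf).card = q + 1 := by
      rw [Finset.card_insert_of_notMem hzS, hSf,
        Finset.card_image_of_injective _ (fun x y h => (algebraMap Fq A).injective (hAKt h)),
        Finset.card_univ, hq]
    have hcard2 : ((X ^ q - X : Polynomial Kt).roots.toFinset).card ≤ q := by
      refine le_trans (Multiset.toFinset_card_le _) (le_trans (Polynomial.card_roots' _) ?_)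
      refine le_trans (Polynomial.natDegree_sub_le _ _) ?_
      simp [Polynomial.natDegree_X_pow, Polynomial.natDegree_X]
      omega
    have := Finset.card_le_card hsub
    omega
  -- elements τA, νA of A mapping to trace and norm of ε
  obtain ⟨τ₀, hτ₀⟩ := hL1 (ε + ε ^ q) hτq
  obtain ⟨ν₀, hν₀⟩ := hL1 (ε * ε ^ q) hνq
  set τA : A := algebraMap Fq A τ₀ with hτAdef
  set νA : A := algebraMap Fq A ν₀ with hνAdef
  have hτA : algebraMap A Kt τA = ε + ε ^ q := hτ₀
  have hνA : algebraMap A Kt νA = ε * ε ^ q := hν₀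
  have hν0 : ν₀ ≠ 0 := by
    intro h
    apply mul_ne_zero hε0 hεq0
    rw [← hνA, hνAdef, h, map_zero, map_zero]
  have hνunit : IsUnit νA := (isUnit_iff_ne_zero.mpr hν0).map (algebraMap Fq A)
  have hεqε : ε ^ q = algebraMap A Kt τA - ε := by rw [hτA]; ring
  have hε2eq : ε ^ 2 = algebraMap A Kt τA * ε - algebraMap A Kt νA := by
    rw [hτA, hνA]; ring
  set τK : K := algebraMap A K τA with hτKdef
  set νK : K := algebraMap A K νA with hνKdef
  have hτKg : algebraMap K Kt τK = ε + ε ^ q := by rw [hτKdef, ← htow]; exact hτA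
  have hνKg : algebraMap K Kt νK = ε * ε ^ q := by rw [hνKdef, ← htow]; exact hνA
  have hε2g : ε ^ 2 = algebraMap K Kt τK * ε - algebraMap K Kt νK := by
    rw [hτKg, hνKg]; ring
  have hτKq : τK ^ q = τK := by
    apply hKKt
    rw [map_pow, hτKg]
    exact hτq
  -- linear independence of 1, ε over K
  have hB1 : ∀ x y : K, algebraMap K Kt x + algebraMap K Kt y * ε = 0 → x = 0 ∧ y = 0 := by
    intro x y h
    rcases eq_or_ne y 0 with hy | hy
    · refine ⟨?_, hy⟩
      apply hKKt
      rw [map_zero]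
      rw [hy, map_zero, zero_mul, add_zero] at h
      exact h
    · exfalso
      apply hε1
      have hgy : algebraMap K Kt y ≠ 0 := fun h0 => hy (hKKt (by rw [h0, map_zero]))
      refine ⟨-x / y, ?_⟩
      rw [map_div₀, map_neg, div_eq_iff hgy]
      linear_combination -h
  have hB2 : ∀ x y x' y' : K, algebraMap K Kt x + algebraMap K Kt y * ε
      = algebraMap K Kt x' + algebraMap K Kt y' * ε → x = x' ∧ y = y' := by
    intro x y x' y' h
    have h2 := hB1 (x - x') (y - y') (by simp only [map_sub]; linear_combination h)
    exact ⟨sub_eq_zero.mp h2.1, sub_eq_zero.mp h2.2⟩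
  -- every element of Kt has coordinates over K
  have hspan : ∀ z : Kt, ∃ u v : K,
      z = algebraMap K Kt u + algebraMap K Kt v * ε := by
    intro z
    let S : Subalgebra K Kt :=
      { carrier := {z | ∃ u v : K, z = algebraMap K Kt u + algebraMap K Kt v * ε}
        mul_mem' := by
          rintro z1 z2 ⟨u, v, rfl⟩ ⟨u', v', rfl⟩
          refine ⟨u * u' - v * v' * νK, u * v' + u' * v + v * v' * τK, ?_⟩
          simp only [map_add, map_sub, _root_.map_mul]
          linear_combination (algebraMap K Kt v * algebraMap K Kt v') * hε2g
        one_mem' := ⟨1, 0, by simp⟩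
        add_mem' := by
          rintro z1 z2 ⟨u, v, rfl⟩ ⟨u', v', rfl⟩
          exact ⟨u + u', v + v', by simp only [map_add]; ring⟩
        zero_mem' := ⟨0, 0, by simp⟩
        algebraMap_mem' := fun r => ⟨r, 0, by simp⟩ }
    have hle : Algebra.adjoin K {ε} ≤ S := by
      apply Algebra.adjoin_le
      rw [Set.singleton_subset_iff]
      exact ⟨0, 1, by simp⟩
    have hz : z ∈ Algebra.adjoin K {ε} := by rw [hgen]; trivial
    exact hle hz
  obtain ⟨u, v, hωuv⟩ := hspan ω
  have hv : v ≠ 0 := by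
    intro h
    apply hω
    exact ⟨u, by rw [hωuv, h, map_zero, zero_mul, add_zero]⟩
  constructor
  · rintro ⟨M, hMns, hMfix⟩
    set N : Matrix (Fin 2) (Fin 2) A := (↑M : Matrix (Fin 2) (Fin 2) A) with hNdef
    set a := N 0 0 with hadef
    set b := N 0 1 with hbdef
    set c := N 1 0 with hcdef
    set d := N 1 1 with hddef
    have hdetu : IsUnit (a * d - b * c) := by
      have h1 : IsUnit N.det := (Matrix.isUnit_iff_isUnit_det N).mp M.isUnit
      rwa [Matrix.det_fin_two] at h1
    obtain ⟨e, hedet⟩ := hdetu.exists_right_inv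
    have hω0 : ω ≠ 0 := fun h => hω ⟨0, by rw [map_zero, h]⟩
    have hden0 : algebraMap A Kt c * ω + algebraMap A Kt d ≠ 0 := by
      intro h0
      rcases eq_or_ne c 0 with hc | hc
      · rw [hc, map_zero, zero_mul, zero_add] at h0
        have hd : d = 0 := hAKt (by rw [h0, map_zero])
        rw [hd, hc, mul_zero, mul_zero, sub_zero] at hdetu
        exact not_isUnit_zero hdetu
      · apply hω
        have hfc : algebraMap A Kt c ≠ 0 := fun h => hc (hAKt (by rw [h, map_zero]))
        refine ⟨-(algebraMap A K d) / algebraMap A K c, ?_⟩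
        rw [map_div₀, map_neg, ← htow, ← htow, div_eq_iff hfc]
        linear_combination -h0
    have hfix : algebraMap A Kt a * ω + algebraMap A Kt b
        = ω * (algebraMap A Kt c * ω + algebraMap A Kt d) := by
      have h := hMfix
      unfold mob at h
      rw [← hadef, ← hbdef, ← hcdef, ← hddef] at h
      rw [div_eq_iff hden0] at h
      linear_combination h
    have hcne : c ≠ 0 := by
      intro hc0
      rw [hc0, map_zero, zero_mul, zero_add] at hfix
      rcases eq_or_ne a d with had | had
      · have hb0 : b = 0 := by
          apply hAKt; rw [map_zero]
          rw [had] at hfix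
          linear_combination hfix
        apply hMns
        refine ⟨a, ?_⟩
        have e00 : N 0 0 = a := hadef.symm
        have e01 : N 0 1 = 0 := by rw [← hbdef, hb0]
        have e10 : N 1 0 = 0 := by rw [← hcdef, hc0]
        have e11 : N 1 1 = a := by rw [← hddef, had]
        ext i j
        rw [Matrix.smul_apply, Matrix.one_apply, smul_eq_mul]
        fin_cases i <;> fin_cases j
        · rw [if_pos rfl, mul_one]; exact e00
        · rw [if_neg (by decide), mul_zero]; exact e01
        · rw [if_neg (by decide), mul_zero]; exact e10
        · rw [if_pos rfl, mul_one]; exact e11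
      · apply hω
        have hfd : algebraMap A Kt d - algebraMap A Kt a ≠ 0 := by
          intro h
          exact had (hAKt (by linear_combination -h))
        refine ⟨algebraMap A K b / (algebraMap A K d - algebraMap A K a), ?_⟩
        rw [map_div₀, map_sub, ← htow, ← htow, ← htow, div_eq_iff hfd]
        linear_combination hfix
    -- coordinate equations
    have hKey2 : algebraMap K Kt (algebraMap A K c * (u*u - v*v*νK)
          + (algebraMap A K d - algebraMap A K a) * u - algebraMap A K b)
        + algebraMap K Kt (algebraMap A K c * (u*v + u*v + v*v*τK)
          + (algebraMap A K d - algebraMap A K a) * v) * ε = 0 := by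
      have hKey := hfix
      rw [htow a, htow b, htow c, htow d, hωuv] at hKey
      simp only [map_add, map_sub, _root_.map_mul]
      linear_combination -hKey - (algebraMap K Kt (algebraMap A K c)
        * algebraMap K Kt v * algebraMap K Kt v) * hε2g
    obtain ⟨hC0, hC1⟩ := hB1 _ _ hKey2
    have hE1 : algebraMap A K c * (u + u + v*τK)
        + (algebraMap A K d - algebraMap A K a) = 0 := by
      have h2 : v * (algebraMap A K c * (u + u + v*τK)
          + (algebraMap A K d - algebraMap A K a)) = 0 := by
        linear_combination hC1
      exact (mul_eq_zero.mp h2).resolve_left hv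
    have hE2 : algebraMap A K c * (u*u + u*v*τK + v*v*νK) = - algebraMap A K b := by
      linear_combination -hC0 + u * hE1
    -- the unit β = f a - f c ω of the order A[ε]
    set βKt : Kt := algebraMap A Kt a - algebraMap A Kt c * ω with hβdef
    set βσ : Kt := algebraMap A Kt d + algebraMap A Kt c * ω with hβσdef
    have hquad : βKt^2 - algebraMap A Kt (a+d) * βKt + algebraMap A Kt (a*d - b*c) = 0 := by
      rw [hβdef]
      simp only [map_add, map_sub, _root_.map_mul]
      linear_combination (-(algebraMap A Kt c)) * hfix
    have hquadσ : βσ^2 - algebraMap A Kt (a+d) * βσ + algebraMap A Kt (a*d - b*c) = 0 := by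
      rw [hβσdef]
      simp only [map_add, map_sub, _root_.map_mul]
      linear_combination (-(algebraMap A Kt c)) * hfix
    have hββσ : βKt * (βσ * algebraMap A Kt e) = 1 := by
      rw [hβdef, hβσdef]
      have hedetKt : (algebraMap A Kt a * algebraMap A Kt d
          - algebraMap A Kt b * algebraMap A Kt c) * algebraMap A Kt e = 1 := by
        rw [← _root_.map_mul, ← _root_.map_mul, ← _root_.map_sub, ← _root_.map_mul, hedet,
          _root_.map_one]
      linear_combination hedetKt + (algebraMap A Kt e * algebraMap A Kt c) * hfix
    have hPmonic : ((X:Polynomial A)^2 + (C (-(a+d)) * X + C (a*d - b*c))).Monic := by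
      exact Polynomial.monic_X_pow_add (n := 2)
        (p := C (-(a+d)) * X + C (a*d - b*c))
        (lt_of_le_of_lt Polynomial.degree_linear_le (by norm_num))
    have hβint : IsIntegral A βKt := by
      refine ⟨(X:Polynomial A)^2 + (C (-(a+d)) * X + C (a*d - b*c)), hPmonic, ?_⟩
      simp only [eval₂_add, eval₂_mul, eval₂_pow, eval₂_X, eval₂_C, eval₂_neg, map_neg]
      linear_combination hquad
    have hβσint : IsIntegral A βσ := by
      refine ⟨(X:Polynomial A)^2 + (C (-(a+d)) * X + C (a*d - b*c)), hPmonic, ?_⟩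
      simp only [eval₂_add, eval₂_mul, eval₂_pow, eval₂_X, eval₂_C, eval₂_neg, map_neg]
      linear_combination hquadσ
    have hβmem : βKt ∈ Algebra.adjoin A {ε} := by
      rw [hAt]; exact hβint
    have hβσmem : βσ * algebraMap A Kt e ∈ Algebra.adjoin A {ε} := by
      rw [hAt]
      exact mul_mem hβσint (Subalgebra.algebraMap_mem _ e)
    have hβpow : βKt ^ q ^ 2 = βKt := hAtunits βKt (βσ * algebraMap A Kt e) hβmem hβσmem hββσ
    -- coordinates of β
    obtain ⟨x0, hx0⟩ : ∃ x0 : K, x0 = algebraMap A K a - algebraMap A K c * u := ⟨_, rfl⟩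
    obtain ⟨y0, hy0⟩ : ∃ y0 : K, y0 = -(algebraMap A K c * v) := ⟨_, rfl⟩
    have hβcoord : βKt = algebraMap K Kt x0 + algebraMap K Kt y0 * ε := by
      rw [hβdef, hx0, hy0, htow a, htow c, hωuv]
      simp only [map_add, map_sub, map_neg, _root_.map_mul]
      ring
    have hpowq : ∀ x y : K, (algebraMap K Kt x + algebraMap K Kt y * ε) ^ q
        = algebraMap K Kt (x^q + y^q * τK) + algebraMap K Kt (-(y^q)) * ε := by
      intro x y
      rw [hfrobKt, mul_pow, ← map_pow, ← map_pow]
      have hh : ε ^ q = algebraMap K Kt τK - ε := by rw [hτKg]; ring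
      rw [hh]
      simp only [map_add, map_neg, _root_.map_mul]
      ring
    have hβq2 : βKt ^ q ^ 2
        = algebraMap K Kt ((x0^q + y0^q * τK)^q + (-(y0^q))^q * τK)
          + algebraMap K Kt (-((-(y0^q))^q)) * ε := by
      rw [sq, pow_mul, hβcoord, hpowq, hpowq]
    have hcc : algebraMap K Kt ((x0^q + y0^q * τK)^q + (-(y0^q))^q * τK)
          + algebraMap K Kt (-((-(y0^q))^q)) * ε
        = algebraMap K Kt x0 + algebraMap K Kt y0 * ε := by
      rw [← hβq2, hβpow, hβcoord]
    obtain ⟨hX, hY⟩ := hB2 _ _ _ _ hcc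
    have hyy : y0 ^ q ^ 2 = y0 := by
      have h1 : (-(y0 ^ q)) ^ q = -(y0 ^ q ^ 2) := by
        rw [hnegK, ← pow_mul, ← sq]
      rw [h1, neg_neg] at hY
      exact hY
    have hxx : x0 ^ q ^ 2 = x0 := by
      have h2 := hX
      rw [hfrobK, mul_pow, hτKq, hnegK] at h2
      have h3 : x0 ^ q ^ 2 = (x0^q)^q := by rw [sq, pow_mul]
      rw [h3]
      linear_combination h2
    -- y0 and x0 come from A, and y0 is a unit
    have hyint : IsIntegral A y0 := by
      refine ⟨(X:Polynomial A)^(q^2) - X, ?_, ?_⟩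
      · apply Polynomial.monic_X_pow_sub
        refine lt_of_le_of_lt Polynomial.degree_X_le ?_
        exact_mod_cast (by omega : 1 < q ^ 2)
      · simp only [eval₂_sub, eval₂_pow, eval₂_X]
        rw [hyy, sub_self]
    have hxint : IsIntegral A x0 := by
      refine ⟨(X:Polynomial A)^(q^2) - X, ?_, ?_⟩
      · apply Polynomial.monic_X_pow_sub
        refine lt_of_le_of_lt Polynomial.degree_X_le ?_
        exact_mod_cast (by omega : 1 < q ^ 2)
      · simp only [eval₂_sub, eval₂_pow, eval₂_X]
        rw [hxx, sub_self]
    obtain ⟨t₁, ht₁⟩ := IsIntegrallyClosed.isIntegral_iff.mp hyint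
    obtain ⟨s₁, hs₁⟩ := IsIntegrallyClosed.isIntegral_iff.mp hxint
    have ht₁q : t₁ ^ q ^ 2 = t₁ := by
      apply hAK
      rw [map_pow, ht₁, hyy]
    have ht₁alg : IsAlgebraic Fq t₁ := by
      refine ⟨(X:Polynomial Fq)^(q^2) - X, ?_, ?_⟩
      · intro h
        have h2 : (X:Polynomial Fq)^(q^2) = X := by rwa [sub_eq_zero] at h
        have h3 := congrArg natDegree h2
        rw [natDegree_X_pow, natDegree_X] at h3
        omega
      · simp only [map_sub, map_pow, aeval_X]
        rw [ht₁q, sub_self]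
    obtain ⟨γ, hγ⟩ := halg t₁ ht₁alg
    have ht₁0 : t₁ ≠ 0 := by
      intro h
      have hz : y0 = 0 := by rw [← ht₁, h, map_zero]
      rw [hy0] at hz
      rcases mul_eq_zero.mp (neg_eq_zero.mp hz) with h' | h'
      · exact hcne (hAK (by rw [h', map_zero]))
      · exact hv h'
    have ht₁unit : IsUnit t₁ := by
      rw [← hγ]
      exact (isUnit_iff_ne_zero.mpr
        (fun h => ht₁0 (by rw [← hγ, h, map_zero]))).map (algebraMap Fq A)
    obtain ⟨e₁, he₁⟩ := ht₁unit.exists_right_inv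
    have he₁0 : e₁ ≠ 0 := by
      intro h; rw [h, mul_zero] at he₁; exact one_ne_zero he₁.symm
    -- key K-identities
    have hK1 : algebraMap A K c * algebraMap A K e₁ * v = -1 := by
      have he₁K : algebraMap A K t₁ * algebraMap A K e₁ = 1 := by
        rw [← _root_.map_mul, he₁, _root_.map_one]
      rw [ht₁, hy0] at he₁K
      linear_combination -he₁K
    have hs₁K : algebraMap A K s₁ = algebraMap A K a - algebraMap A K c * u := by
      rw [hs₁, hx0]
    have htne : -(c * e₁) ≠ 0 := neg_ne_zero.mpr (mul_ne_zero hcne he₁0)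
    refine ⟨(s₁ - a) * e₁, -(c * e₁), htne, ?_, b * e₁, ?_⟩
    · -- ω = (ε + f s)/(f t)
      have hft : algebraMap A Kt (-(c * e₁)) ≠ 0 :=
        fun h => htne (hAKt (by rw [h, map_zero]))
      rw [eq_div_iff hft]
      rw [hωuv]
      simp only [map_neg, _root_.map_mul, map_sub]
      rw [htow c, htow e₁, htow s₁, htow a]
      have hK1g := congrArg (algebraMap K Kt) hK1
      have hs₁g := congrArg (algebraMap K Kt) hs₁K
      simp only [_root_.map_mul, _root_.map_sub, map_neg, _root_.map_one] at hK1g hs₁g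
      linear_combination (-(algebraMap K Kt (algebraMap A K e₁))) * hs₁g + (-ε) * hK1g
    · -- norm condition
      have hLHS : (ε ^ q + algebraMap A Kt ((s₁ - a) * e₁))
            * (ε + algebraMap A Kt ((s₁ - a) * e₁))
          = algebraMap A Kt (νA + ((s₁ - a) * e₁) * τA
            + ((s₁ - a) * e₁) * ((s₁ - a) * e₁)) := by
        simp only [map_add, _root_.map_mul, map_sub]
        linear_combination (-1 : Kt) * hνA
          - ((algebraMap A Kt s₁ - algebraMap A Kt a) * algebraMap A Kt e₁) * hτA
      rw [hLHS, ← _root_.map_mul]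
      have hAid : νA + ((s₁ - a) * e₁) * τA + ((s₁ - a) * e₁) * ((s₁ - a) * e₁)
          = (-(c * e₁)) * (b * e₁) := by
        apply hAK
        simp only [map_add, _root_.map_mul, map_sub, map_neg]
        rw [← hτKdef, ← hνKdef]
        linear_combination (algebraMap A K e₁ * τK + algebraMap A K e₁ * algebraMap A K e₁
            * (algebraMap A K s₁ - algebraMap A K a - algebraMap A K c * u)) * hs₁K
          + (algebraMap A K c * algebraMap A K e₁ * algebraMap A K e₁) * hE2
          + (νK * (1 - algebraMap A K c * algebraMap A K e₁ * v)
            - algebraMap A K c * u * algebraMap A K e₁ * τK) * hK1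
      rw [hAid]
  · rintro ⟨s, t, ht, hωst, t', hnorm⟩
    have hft : algebraMap A Kt t ≠ 0 := fun h => ht (hAKt (by rw [h, map_zero]))
    have htt' : t * t' = νA + s * τA + s * s := by
      apply hAKt
      rw [_root_.map_mul]
      rw [← hnorm]
      simp only [map_add, _root_.map_mul, hτA, hνA]
      ring
    set N : Matrix (Fin 2) (Fin 2) A := !![-s, t'; -t, s + τA] with hN
    have h00 : N 0 0 = -s := by rw [hN]; simp
    have h01 : N 0 1 = t' := by rw [hN]; simp
    have h10 : N 1 0 = -t := by rw [hN]; simp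
    have h11 : N 1 1 = s + τA := by rw [hN]; simp
    have hNdet : N.det = νA := by
      rw [hN, Matrix.det_fin_two_of]
      linear_combination htt'
    have hNunit : IsUnit N := (Matrix.isUnit_iff_isUnit_det N).mpr (by rw [hNdet]; exact hνunit)
    refine ⟨hNunit.unit, ?_, ?_⟩
    · rintro ⟨α, hα⟩
      rw [IsUnit.unit_spec] at hα
      have h2 := congrFun (congrFun hα 1) 0
      rw [h10] at h2
      rw [Matrix.smul_apply, Matrix.one_apply_ne (by decide : (1 : Fin 2) ≠ 0)] at h2
      simp at h2
      exact ht h2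
    · have hωt : ω * algebraMap A Kt t = ε + algebraMap A Kt s := by
        rw [hωst, div_mul_cancel₀ _ hft]
      have hden : algebraMap A Kt (N 1 0) * ω + algebraMap A Kt (N 1 1) = ε ^ q := by
        rw [h10, h11]
        simp only [map_add, map_neg]
        rw [hεqε]
        linear_combination -hωt
      have hnum : algebraMap A Kt (N 0 0) * ω + algebraMap A Kt (N 0 1) = ε ^ q * ω := by
        rw [h00, h01, map_neg]
        apply mul_right_cancel₀ hft
        linear_combination (-(algebraMap A Kt s) - ε ^ q) * hωt - hnorm
      rw [IsUnit.unit_spec]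
      unfold mob
      rw [hnum, hden]
      exact mul_div_cancel_left₀ ω hεq0
end

section
/- Let s, t, t' ∈ A with t ≠ 0 and (ε^q + s)(ε + s) = t·t', and set ω = (ε + s)/t, s' = (ε + ε^q) + s (note ε + ε^q and ε^{q+1} lie in the image of 𝔽_q, hence in A), and M₀ = [[s', −t'],[t, −s]]. Then det M₀ = ε^{q+1}, which lies in the image of 𝔽_q^×, so M₀ ∈ GL₂(A); M₀ is non-scalar; the vector (ω, 1)ᵀ is an eigenvector of M₀ with eigenvalue ε (equivalently M₀·ω = ω under the Möbius action); and the characteristic polynomial of M₀ is (X − ε)(X − ε^q). -/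
open Matrix Polynomial

/-- The explicit elliptic-point stabilizing matrix `M₀ = [[s', −t'],[t, −s]]` with
`s' = (ε + ε^q) + s`: it has determinant `ε^{q+1}` (a norm, lying in the image of `𝔽_q^×`),
is non-scalar, fixes `ω = (ε+s)/t` with eigenvalue `ε`, and has characteristic polynomial
`(X − ε)(X − ε^q)`. -/
theorem stmt_1 (Fq : Type*) [Field Fq] [Fintype Fq] (q : ℕ) (hq : Fintype.card Fq = q)
    (A : Type*) [CommRing A] [IsDomain A] [IsDedekindDomain A] [Algebra Fq A]
    (K : Type*) [Field K] [Algebra A K] [IsFractionRing A K]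
    (hunits : ∀ u : Aˣ, ∃ α : Fqˣ, algebraMap Fq A (α : Fq) = (u : A))
    (halg : ∀ a : A, IsAlgebraic Fq a → ∃ α : Fq, algebraMap Fq A α = a)
    (Kt : Type*) [Field Kt] [Algebra K Kt] [Algebra A Kt] [IsScalarTower A K Kt]
    (ε : Kt) (hε1 : ε ∉ Set.range (algebraMap K Kt)) (hε2 : ε ^ q ^ 2 = ε)
    (hε3 : ε ^ q ≠ ε) (hgen : Algebra.adjoin K {ε} = ⊤)
    (s t t' : A) (ht : t ≠ 0)
    (heq : (ε ^ q + algebraMap A Kt s) * (ε + algebraMap A Kt s) =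
      algebraMap A Kt t * algebraMap A Kt t')
    -- `ε + ε^q` and `ε^{q+1}` lie in the image of `𝔽_q`, hence in `A`:
    (a : A) (ha : algebraMap A Kt a = ε + ε ^ q) (ha' : ∃ α : Fq, algebraMap Fq A α = a)
    (ω : Kt) (hω : ω = (ε + algebraMap A Kt s) / algebraMap A Kt t)
    (M₀ : Matrix (Fin 2) (Fin 2) A) (hM₀ : M₀ = !![a + s, -t'; t, -s]) :
    algebraMap A Kt M₀.det = ε ^ (q + 1) ∧
      (∃ α : Fqˣ, algebraMap Fq A (α : Fq) = M₀.det) ∧ IsUnit M₀.det ∧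
      (¬ ∃ α : A, M₀ = α • (1 : Matrix (Fin 2) (Fin 2) A)) ∧
      (M₀.map (algebraMap A Kt)).mulVec ![ω, 1] = ε • ![ω, 1] ∧
      mob M₀ ω = ω ∧
      (M₀.map (algebraMap A Kt)).charpoly = (X - C ε) * (X - C (ε ^ q)) := by
  have hinj : Function.Injective (algebraMap A Kt) := by
    rw [IsScalarTower.algebraMap_eq A K Kt]
    exact (algebraMap K Kt).injective.comp (IsFractionRing.injective A K)
  have hε0 : ε ≠ 0 := by
    intro h
    exact hε1 ⟨0, by simp [h]⟩
  have hq2 : 2 ≤ q := hq ▸ Fintype.one_lt_card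
  have ht0 : algebraMap A Kt t ≠ 0 := fun h => ht (hinj (by simpa using h))
  -- determinant computation
  have hdetA : M₀.det = (a + s) * (-s) - (-t') * t := by
    rw [hM₀, Matrix.det_fin_two_of]
  have e00 : M₀ 0 0 = a + s := by rw [hM₀]; rfl
  have e01 : M₀ 0 1 = -t' := by rw [hM₀]; rfl
  have e10 : M₀ 1 0 = t := by rw [hM₀]; rfl
  have e11 : M₀ 1 1 = -s := by rw [hM₀]; rfl
  have hdet : algebraMap A Kt M₀.det = ε ^ (q + 1) := by
    rw [hdetA]
    simp only [map_sub, _root_.map_mul, map_add, map_neg]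
    rw [pow_succ]
    linear_combination (-(algebraMap A Kt s)) * ha - heq
  have hdetne : M₀.det ≠ 0 := by
    intro h
    rw [h, map_zero] at hdet
    exact pow_ne_zero _ hε0 hdet.symm
  -- det is fixed by Frobenius, hence algebraic over Fq
  have hfrob : M₀.det ^ q = M₀.det := by
    apply hinj
    rw [map_pow, hdet, ← pow_mul]
    have h : (q + 1) * q = q ^ 2 + q := by ring
    rw [h, pow_add, hε2, pow_succ]
    ring
  obtain ⟨α, hα⟩ := halg M₀.det ⟨X ^ q - X, by
      intro h
      have h1 : (X ^ q - X : Fq[X]).coeff q = 0 := by rw [h]; simp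
      rw [coeff_sub, coeff_X_pow, coeff_X] at h1
      simp only [if_pos rfl] at h1
      rw [if_neg (by omega : ¬ (1 = q))] at h1
      simp at h1,
    by simp [hfrob]⟩
  have hα0 : α ≠ 0 := by
    intro h
    rw [h, map_zero] at hα
    exact hdetne hα.symm
  refine ⟨hdet, ⟨Units.mk0 α hα0, hα⟩, ?_, ?_, ?_, ?_, ?_⟩
  · rw [← hα]
    exact (Units.mk0 α hα0).isUnit.map (algebraMap Fq A)
  · rintro ⟨β, h⟩
    rw [hM₀] at h
    have := congrFun (congrFun h 1) 0
    simp [Matrix.smul_apply, Matrix.one_apply] at this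
    exact ht this
  · -- eigenvector
    have hωt : algebraMap A Kt t * ω = ε + algebraMap A Kt s := by
      rw [hω]; field_simp
    have h1 : algebraMap A Kt (a + s) * ω + algebraMap A Kt (-t') = ε * ω := by
      have hmul : algebraMap A Kt t * (algebraMap A Kt (a + s) * ω + algebraMap A Kt (-t'))
          = algebraMap A Kt t * (ε * ω) := by
        simp only [map_add, map_neg]
        linear_combination (algebraMap A Kt a + algebraMap A Kt s - ε) * hωt
          + heq + (ε + algebraMap A Kt s) * ha
      exact mul_left_cancel₀ ht0 hmul
    have h2 : algebraMap A Kt t * ω + algebraMap A Kt (-s) = ε := by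
      rw [map_neg]; linear_combination hωt
    funext i
    fin_cases i <;>
      simp only [Matrix.map_apply, Matrix.mulVec, dotProduct, Fin.sum_univ_two,
        Matrix.cons_val', Matrix.cons_val_zero, Matrix.cons_val_one, Matrix.head_cons,
        Matrix.head_fin_const, Matrix.empty_val', Matrix.cons_val_fin_one, Fin.isValue,
        Matrix.smul_cons, smul_eq_mul, Matrix.smul_empty, Fin.zero_eta, Fin.mk_one, mul_one]
    · rw [e00, e01]; exact h1
    · rw [e10, e11]; exact h2
  · -- Möbius fixed point
    have hωt : algebraMap A Kt t * ω = ε + algebraMap A Kt s := by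
      rw [hω]; field_simp
    have h1 : algebraMap A Kt (a + s) * ω + algebraMap A Kt (-t') = ε * ω := by
      have hmul : algebraMap A Kt t * (algebraMap A Kt (a + s) * ω + algebraMap A Kt (-t'))
          = algebraMap A Kt t * (ε * ω) := by
        simp only [map_add, map_neg]
        linear_combination (algebraMap A Kt a + algebraMap A Kt s - ε) * hωt
          + heq + (ε + algebraMap A Kt s) * ha
      exact mul_left_cancel₀ ht0 hmul
    have h2 : algebraMap A Kt t * ω + algebraMap A Kt (-s) = ε := by
      rw [map_neg]; linear_combination hωt
    rw [mob, e00, e01, e10, e11, h1, h2, mul_comm, mul_div_assoc, div_self hε0, mul_one]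
  · -- charpoly
    rw [Matrix.charpoly, Matrix.det_fin_two]
    rw [Matrix.charmatrix_apply_eq, Matrix.charmatrix_apply_eq,
      Matrix.charmatrix_apply_ne _ _ _ (by decide), Matrix.charmatrix_apply_ne _ _ _ (by decide)]
    have hCa : (C (algebraMap A Kt a) : Polynomial Kt) = C ε + C (ε ^ q) := by
      rw [ha, map_add]
    have hCeq : ((C (ε ^ q) : Polynomial Kt) + C (algebraMap A Kt s)) *
        (C ε + C (algebraMap A Kt s)) = C (algebraMap A Kt t) * C (algebraMap A Kt t') := by
      rw [← map_add, ← map_add, ← _root_.map_mul, heq, _root_.map_mul]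
    rw [Matrix.map_apply, Matrix.map_apply, Matrix.map_apply, Matrix.map_apply,
      e00, e01, e10, e11]
    simp only [map_add, map_neg, Polynomial.C_add, Polynomial.C_neg]
    linear_combination (-X - C (algebraMap A Kt s)) * hCa - hCeq
end

section
/- Let A be a nontrivial commutative 𝔽_q-algebra, let f ∈ 𝔽_q[X] be a monic irreducible polynomial of degree 2, and let s, t, t' ∈ A satisfy f(s) = t·t' (evaluation via the algebra map). If 𝔭 is a prime ideal of A with t ∈ 𝔭 and the quotient A/𝔭 is finite-dimensional as an 𝔽_q-vector space, then dim_{𝔽_q}(A/𝔭) is even. (This is Lemma 1.7(a): every prime ideal of A dividing tA has even degree; here f is the minimal polynomial over 𝔽_q of −ε for ε ∈ 𝔽_{q²} \ 𝔽_q, so that f(s) = (ε^q + s)(ε + s).) -/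
/-- **Lemma 1.7(a).** If `f ∈ 𝔽_q[X]` is monic irreducible of degree `2` and
`f(s) = t·t'` in a nontrivial commutative `𝔽_q`-algebra `A`, then every prime ideal `𝔭`
of `A` containing `t` whose residue ring is finite-dimensional over `𝔽_q` has even degree
`dim_{𝔽_q}(A/𝔭)`. -/
theorem stmt_6 (Fq : Type*) [Field Fq] [Fintype Fq] (q : ℕ) (hq : Fintype.card Fq = q)
    (A : Type*) [CommRing A] [Nontrivial A] [Algebra Fq A]
    (f : Polynomial Fq) (hmonic : f.Monic) (hirr : Irreducible f) (hdeg : f.natDegree = 2)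
    (s t t' : A) (hft : Polynomial.aeval s f = t * t')
    (𝔭 : Ideal A) (hp : 𝔭.IsPrime) (ht : t ∈ 𝔭)
    [FiniteDimensional Fq (A ⧸ 𝔭)] :
    Even (Module.finrank Fq (A ⧸ 𝔭)) := by
  haveI : IsDomain (A ⧸ 𝔭) := Ideal.Quotient.isDomain 𝔭
  have hK : IsField (A ⧸ 𝔭) :=
    isField_of_isIntegral_of_isField' (R := Fq) (Semifield.toIsField Fq)
  letI : Field (A ⧸ 𝔭) := hK.toField
  set sb : A ⧸ 𝔭 := Ideal.Quotient.mk 𝔭 s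
  have hroot : Polynomial.aeval sb f = 0 := by
    have h := Polynomial.aeval_algHom_apply (Ideal.Quotient.mkₐ Fq 𝔭) s f
    rw [Ideal.Quotient.mkₐ_eq_mk] at h
    rw [show sb = Ideal.Quotient.mk 𝔭 s from rfl, h, hft, Ideal.Quotient.eq_zero_iff_mem]
    exact 𝔭.mul_mem_right t' ht
  have hmin : minpoly Fq sb = f := by
    symm
    exact minpoly.eq_of_irreducible_of_monic hirr hroot hmonic
  have h2 : Module.finrank Fq (IntermediateField.adjoin Fq {sb} : IntermediateField Fq (A ⧸ 𝔭)) = 2 := by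
    rw [IntermediateField.adjoin.finrank (Algebra.IsIntegral.isIntegral sb), hmin, hdeg]
  have := Module.finrank_mul_finrank Fq (IntermediateField.adjoin Fq {sb} : IntermediateField Fq (A ⧸ 𝔭)) (A ⧸ 𝔭)
  rw [h2] at this
  exact ⟨_, by rw [← this]; ring⟩
end

section
/- Let A be a Dedekind domain that is also an 𝔽_q-algebra, let f ∈ 𝔽_q[X] be a monic irreducible polynomial of degree 2, and let s, t, t' ∈ A satisfy f(s) = t·t' with t ≠ 0. If A/tA is finite-dimensional as an 𝔽_q-vector space, then dim_{𝔽_q}(A/tA) is even. (This is the coordinate-free form of Lemma 1.7(b): since the distinguished place ∞ has odd degree δ and dim_{𝔽_q}(A/tA) = −δ·ν(t), it is equivalent to ν(t) being even.) -/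
/-- **Lemma 1.7(b).** If `A` is a Dedekind domain and `𝔽_q`-algebra, `f ∈ 𝔽_q[X]` is
monic irreducible of degree `2`, and `f(s) = t·t'` with `t ≠ 0`, then `dim_{𝔽_q}(A/tA)`
is even (whenever it is finite). -/
theorem stmt_7 (Fq : Type*) [Field Fq] [Fintype Fq] (q : ℕ) (hq : Fintype.card Fq = q)
    (A : Type*) [CommRing A] [IsDomain A] [IsDedekindDomain A] [Algebra Fq A]
    (f : Polynomial Fq) (hmonic : f.Monic) (hirr : Irreducible f) (hdeg : f.natDegree = 2)
    (s t t' : A) (ht : t ≠ 0) (hft : Polynomial.aeval s f = t * t')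
    [FiniteDimensional Fq (A ⧸ Ideal.span {t})] :
    Even (Module.finrank Fq (A ⧸ Ideal.span {t})) := by
  set B := A ⧸ Ideal.span {t} with hBdef
  by_cases hB : Subsingleton B
  · rw [Module.finrank_zero_of_subsingleton]
    exact Even.zero
  · have : Nontrivial B := not_subsingleton_iff_nontrivial.mp hB
    haveI : Fact (Irreducible f) := ⟨hirr⟩
    have hroot : Polynomial.eval₂ (algebraMap Fq B) (Ideal.Quotient.mk _ s) f = 0 := by
      have : Polynomial.aeval ((Ideal.Quotient.mkₐ Fq (Ideal.span {t})) s) f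
          = (Ideal.Quotient.mkₐ Fq (Ideal.span {t})) (Polynomial.aeval s f) := by
        rw [Polynomial.aeval_algHom_apply]
      rw [Polynomial.aeval_def] at this
      simp only [Ideal.Quotient.mkₐ_eq_mk] at this
      rw [this, hft]
      exact Ideal.Quotient.eq_zero_iff_mem.mpr
        (Ideal.mul_mem_right _ _ (Ideal.subset_span rfl))
    let φ : AdjoinRoot f →+* B := AdjoinRoot.lift (algebraMap Fq B) (Ideal.Quotient.mk _ s) hroot
    letI : Algebra (AdjoinRoot f) B := φ.toAlgebra
    haveI : IsScalarTower Fq (AdjoinRoot f) B := IsScalarTower.of_algebraMap_eq fun x => by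
      show algebraMap Fq B x = φ (algebraMap Fq (AdjoinRoot f) x)
      rw [AdjoinRoot.algebraMap_eq]
      exact (AdjoinRoot.lift_of hroot).symm
    have hmul := Module.finrank_mul_finrank Fq (AdjoinRoot f) B
    have hK : Module.finrank Fq (AdjoinRoot f) = 2 := by
      rw [(AdjoinRoot.powerBasis hmonic.ne_zero).finrank, AdjoinRoot.powerBasis_dim, hdeg]
    rw [← hmul, hK]
    exact even_two_mul _
end

section
/- Let s, t ∈ A with t ≠ 0 and suppose (ε^q + s)(ε + s) = t·t' for some t' ∈ A. Then: (a) the A-submodule J := tA + (ε + s)A of K̃ is an ideal of Ã = A + εA; (b) J does not depend on the choice of ε: if ε' ∈ K̃ also satisfies ε' ∉ K, ε'^{q²} = ε', ε'^q ≠ ε' (so that ε' = αε + β for some α in the image of 𝔽_q^× and β in the image of 𝔽_q), and ω = (ε + s)/t is written as ω = (ε' + s₁)/t₁ with s₁, t₁ ∈ A, then t₁A + (ε' + s₁)A = tA + (ε + s)A. -/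
/-!
The sum `ε + ε^q` is fixed by the `q`-Frobenius, so it is a constant `u ∈ 𝔽_q`. Hence
`(ε^q + s)(ε + s) = t t'` gives `ε (ε + s) = (u + s)(ε + s) - t t'`, and together with
`ε t = t (ε + s) - s t` this shows that `J = tA + (ε + s)A` is stable under multiplication
by `ε`.

If `(ε' + s₁)/t₁ = (ε + s)/t`, then `ε' + s₁ = c (ε + s)` with `c = t₁/t ∈ K`. Applying the
`q²`-Frobenius, which fixes `ε` and `ε'`, and comparing coefficients in the `K`-basis `1, ε`
gives `c^{q²} = c`. So `c` is a root of unity, hence integral over `A`; as `A` is integrally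
closed, `c` is a root of unity in `A`, i.e. a unit of `A`, and `t₁A + (ε' + s₁)A = c J = J`.
-/

open Polynomial

namespace FiniteField

variable {Fq : Type*} [Field Fq] [Fintype Fq]

theorem splits_X_pow_card_sub_X_self : (X ^ Fintype.card Fq - X : Fq[X]).Splits := by
  rw [splits_iff_card_roots, roots_X_pow_card_sub_X,
    X_pow_card_sub_X_natDegree_eq Fq Fintype.one_lt_card]
  rfl

theorem mem_range_of_pow_card_eq_self {L : Type*} [CommRing L] [IsDomain L] (φ : Fq →+* L)
    {x : L} (hx : x ^ Fintype.card Fq = x) : x ∈ φ.range :=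
  splits_X_pow_card_sub_X_self.mem_range_of_isRoot
    (X_pow_card_sub_X_ne_zero Fq Fintype.one_lt_card) (by simp [hx])

variable {L : Type*} [CommRing L] [Algebra Fq L]

theorem add_pow_card_pow (n : ℕ) (x y : L) :
    (x + y) ^ Fintype.card Fq ^ n = x ^ Fintype.card Fq ^ n + y ^ Fintype.card Fq ^ n := by
  have h (z : L) : (frobeniusAlgHom Fq L ^ n) z = z ^ Fintype.card Fq ^ n := by
    rw [AlgHom.coe_pow, coe_frobeniusAlgHom, pow_iterate]
  simp only [← h, map_add]

theorem add_pow_card_mem_range [IsDomain L] {x : L} (hx : x ^ Fintype.card Fq ^ 2 = x) :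
    x + x ^ Fintype.card Fq ∈ (algebraMap Fq L).range := by
  refine mem_range_of_pow_card_eq_self _ ?_
  have h := add_pow_card_pow (Fq := Fq) 1 x (x ^ Fintype.card Fq)
  rw [pow_one] at h
  rw [h, ← pow_mul, ← sq, hx, add_comm]

end FiniteField

namespace Submodule

variable {R B : Type*} [CommRing R] [CommRing B] [Algebra R B]

theorem mul_mem_span_of_forall_mem {S : Set B} {e : B} (h : ∀ m ∈ S, e * m ∈ span R S)
    {m : B} (hm : m ∈ span R S) : e * m ∈ span R S :=
  (span_le (p := (span R S).comap (LinearMap.mulLeft R e))).mpr h hm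

theorem mul_mem_of_mem_adjoin_singleton (M : Submodule R B) {e : B}
    (he : ∀ m ∈ M, e * m ∈ M) {x : B} (hx : x ∈ Algebra.adjoin R {e}) {m : B} (hm : m ∈ M) :
    x * m ∈ M := by
  induction hx using Algebra.adjoin_induction generalizing m with
  | mem y hy => rw [Set.mem_singleton_iff.mp hy]; exact he m hm
  | algebraMap r => rw [← Algebra.smul_def]; exact M.smul_mem r hm
  | add x y _ _ hx hy => rw [add_mul]; exact M.add_mem (hx hm) (hy hm)
  | mul x y _ _ hx hy => rw [mul_assoc]; exact hx (hy hm)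

theorem mul_mem_span_pair_of_mem_adjoin {e e' : B} {u s t t' : R}
    (hu : e + e' = algebraMap R B u)
    (hN : (e' + algebraMap R B s) * (e + algebraMap R B s) =
      algebraMap R B t * algebraMap R B t')
    {x : B} (hx : x ∈ Algebra.adjoin R {e}) {m : B}
    (hm : m ∈ span R {algebraMap R B t, e + algebraMap R B s}) :
    x * m ∈ span R {algebraMap R B t, e + algebraMap R B s} := by
  set J := span R {algebraMap R B t, e + algebraMap R B s}
  have ht : algebraMap R B t ∈ J := subset_span (by simp)
  have hes : e + algebraMap R B s ∈ J := subset_span (by simp)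
  refine J.mul_mem_of_mem_adjoin_singleton (fun m hm ↦ mul_mem_span_of_forall_mem ?_ hm) hx hm
  rintro _ (rfl | rfl | -)
  · have : e * algebraMap R B t = t • (e + algebraMap R B s) - s • algebraMap R B t := by
      simp only [Algebra.smul_def]; ring
    rw [this]
    exact J.sub_mem (J.smul_mem t hes) (J.smul_mem s ht)
  · have : e * (e + algebraMap R B s) =
        (u + s) • (e + algebraMap R B s) - t' • algebraMap R B t := by
      simp only [Algebra.smul_def, map_add]
      linear_combination (e + algebraMap R B s) * hu - hN
    rw [this]
    exact J.sub_mem (J.smul_mem _ hes) (J.smul_mem t' ht)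

theorem span_pair_smul_of_isUnit {M : Type*} [AddCommGroup M] [Module R M] {a : R}
    (ha : IsUnit a) (x y : M) : span R {a • x, a • y} = span R {x, y} := by
  rw [← span_smul_eq_of_isUnit {x, y} a ha, Set.smul_set_insert, Set.smul_set_singleton]

end Submodule

theorem eq_of_algebraMap_mul_add_eq {K L : Type*} [Field K] [Field L] [Algebra K L] {ε : L}
    (hε : ε ∉ Set.range (algebraMap K L)) {a b c d : K}
    (h : algebraMap K L a * ε + algebraMap K L b = algebraMap K L c * ε + algebraMap K L d) :
    a = c := by
  by_contra hac
  have hac' : algebraMap K L (a - c) ≠ 0 := by simpa [sub_eq_zero] using hac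
  refine hε ⟨(d - b) / (a - c), ?_⟩
  rw [map_div₀, div_eq_iff hac']
  simp only [map_sub]
  linear_combination -h

theorem IsIntegrallyClosed.exists_isUnit_algebraMap_eq_of_pow_eq_one {A K : Type*} [CommRing A]
    [IsIntegrallyClosed A] [Field K] [Algebra A K] [IsFractionRing A K] {c : K} {n : ℕ}
    (hn : n ≠ 0) (hc : c ^ n = 1) : ∃ a : A, IsUnit a ∧ algebraMap A K a = c := by
  obtain ⟨a, rfl⟩ :=
    (isIntegral_iff (R := A)).mp (IsIntegral.of_pow hn.bot_lt (hc ▸ isIntegral_one))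
  have : a ^ n = 1 := IsFractionRing.injective A K (by simpa using hc)
  exact ⟨a, IsUnit.of_pow_eq_one this hn, rfl⟩

section IndependenceOfGenerator

variable {Fq A K L : Type*} [Field Fq] [Fintype Fq] [CommRing A] [IsIntegrallyClosed A]
  [Field K] [Algebra A K] [IsFractionRing A K] [Field L] [Algebra K L] [Algebra A L]
  [IsScalarTower A K L] [Algebra Fq L]

theorem pow_card_pow_eq_self_of_mul_add {ε : L} (hε : ε ∉ Set.range (algebraMap K L)) {n : ℕ}
    (hεn : ε ^ Fintype.card Fq ^ n = ε) {c d : K}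
    (h : (algebraMap K L c * ε + algebraMap K L d) ^ Fintype.card Fq ^ n =
      algebraMap K L c * ε + algebraMap K L d) :
    c ^ Fintype.card Fq ^ n = c := by
  rw [FiniteField.add_pow_card_pow, mul_pow, hεn, ← map_pow, ← map_pow] at h
  exact eq_of_algebraMap_mul_add_eq hε h

theorem exists_isUnit_of_div_eq {ε ε' : L} (hε : ε ∉ Set.range (algebraMap K L)) {n : ℕ}
    (hn : n ≠ 0) (hεn : ε ^ Fintype.card Fq ^ n = ε) (hε'n : ε' ^ Fintype.card Fq ^ n = ε')
    {s t s₁ t₁ : A} (ht : t ≠ 0)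
    (h : (ε + algebraMap A L s) / algebraMap A L t =
      (ε' + algebraMap A L s₁) / algebraMap A L t₁) :
    ∃ a : A, IsUnit a ∧ algebraMap A L t₁ = a • algebraMap A L t ∧
      ε' + algebraMap A L s₁ = a • (ε + algebraMap A L s) := by
  simp only [IsScalarTower.algebraMap_apply A K L, Algebra.smul_def] at h ⊢
  set ι := algebraMap K L
  have ht : algebraMap A K t ≠ 0 := by simpa using ht
  have htL : ι (algebraMap A K t) ≠ 0 := by simpa using ht
  have ht₁ : algebraMap A K t₁ ≠ 0 := by
    rintro h₀
    rw [h₀, map_zero, div_zero, div_eq_zero_iff, map_eq_zero_iff _ ι.injective] at h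
    have hs : ε + ι (algebraMap A K s) = 0 := by simpa [ht] using h
    exact hε ⟨-algebraMap A K s, by rw [map_neg]; linear_combination -hs⟩
  set c := algebraMap A K t₁ / algebraMap A K t
  have hc : ε' + ι (algebraMap A K s₁) = ι c * (ε + ι (algebraMap A K s)) := by
    rw [div_eq_div_iff htL (by simpa using ht₁)] at h
    rw [map_div₀, div_mul_eq_mul_div, eq_div_iff htL]
    linear_combination -h
  have hε' : ε' = ι c * ε + ι (c * algebraMap A K s - algebraMap A K s₁) := by
    simp only [map_sub, map_mul]
    linear_combination hc
  have hcn : c ^ Fintype.card Fq ^ n = c :=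
    pow_card_pow_eq_self_of_mul_add hε hεn (hε' ▸ hε'n)
  have hc0 : c ≠ 0 := div_ne_zero ht₁ ht
  have hN : 1 < Fintype.card Fq ^ n := Nat.one_lt_pow hn Fintype.one_lt_card
  have hc1 : c ^ (Fintype.card Fq ^ n - 1) = 1 := by
    rw [pow_sub₀ c hc0 hN.le, hcn, pow_one, mul_inv_cancel₀ hc0]
  obtain ⟨a, ha, hac⟩ := IsIntegrallyClosed.exists_isUnit_algebraMap_eq_of_pow_eq_one (A := A)
    (Nat.sub_ne_zero_of_lt hN) hc1
  refine ⟨a, ha, ?_, by rw [hac, hc]⟩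
  rw [hac, ← map_mul, div_mul_cancel₀ _ ht]

theorem span_pair_eq_of_div_eq {ε ε' : L} (hε : ε ∉ Set.range (algebraMap K L)) {n : ℕ}
    (hn : n ≠ 0) (hεn : ε ^ Fintype.card Fq ^ n = ε) (hε'n : ε' ^ Fintype.card Fq ^ n = ε')
    {s t s₁ t₁ : A} (ht : t ≠ 0)
    (h : (ε + algebraMap A L s) / algebraMap A L t =
      (ε' + algebraMap A L s₁) / algebraMap A L t₁) :
    Submodule.span A {algebraMap A L t₁, ε' + algebraMap A L s₁} =
      Submodule.span A {algebraMap A L t, ε + algebraMap A L s} := by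
  obtain ⟨a, ha, ht₁, hs₁⟩ := exists_isUnit_of_div_eq (Fq := Fq) hε hn hεn hε'n ht h
  rw [ht₁, hs₁, Submodule.span_pair_smul_of_isUnit ha]

end IndependenceOfGenerator

theorem stmt_8_general (Fq : Type*) [Field Fq] [Fintype Fq] (q : ℕ) (hq : Fintype.card Fq = q)
    (A : Type*) [CommRing A] [IsDedekindDomain A] [Algebra Fq A]
    (K : Type*) [Field K] [Algebra A K] [IsFractionRing A K]
    (Kt : Type*) [Field Kt] [Algebra K Kt] [Algebra A Kt] [IsScalarTower A K Kt]
    (ε : Kt) (hε1 : ε ∉ Set.range (algebraMap K Kt)) (hε2 : ε ^ q ^ 2 = ε)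
    (s t : A) (ht : t ≠ 0) (t' : A)
    (heq : (ε ^ q + algebraMap A Kt s) * (ε + algebraMap A Kt s) =
      algebraMap A Kt t * algebraMap A Kt t') :
    -- (a) `J = tA + (ε + s)A` is an ideal of `Ã`
    (∀ x ∈ Algebra.adjoin A {ε},
      ∀ j ∈ Submodule.span A ({algebraMap A Kt t, ε + algebraMap A Kt s} : Set Kt),
        x * j ∈ Submodule.span A ({algebraMap A Kt t, ε + algebraMap A Kt s} : Set Kt)) ∧
    -- (b) `J` does not depend on the choice of `ε`
    (∀ ε' : Kt, ε' ∉ Set.range (algebraMap K Kt) → ε' ^ q ^ 2 = ε' → ε' ^ q ≠ ε' →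
      ∀ s₁ t₁ : A,
        (ε + algebraMap A Kt s) / algebraMap A Kt t =
          (ε' + algebraMap A Kt s₁) / algebraMap A Kt t₁ →
        Submodule.span A ({algebraMap A Kt t₁, ε' + algebraMap A Kt s₁} : Set Kt) =
          Submodule.span A ({algebraMap A Kt t, ε + algebraMap A Kt s} : Set Kt)) := by
  subst hq
  let _ : Algebra Fq Kt := ((algebraMap A Kt).comp (algebraMap Fq A)).toAlgebra
  obtain ⟨u, hu⟩ := FiniteField.add_pow_card_mem_range hε2
  refine ⟨fun x hx j hj ↦ ?_, fun ε' _ hε'2 _ s₁ t₁ h ↦ ?_⟩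
  · exact Submodule.mul_mem_span_pair_of_mem_adjoin (u := algebraMap Fq A u) hu.symm heq hx hj
  · exact span_pair_eq_of_div_eq (Fq := Fq) hε1 two_ne_zero hε2 hε'2 ht h

/-- **Lemma 2.1.** For an elliptic element `ω = (ε + s)/t` the `A`-module
`J = tA + (ε + s)A` is an ideal of `Ã = A + εA`, and it does not depend on the
choice of `ε`. -/
theorem stmt_8 (Fq : Type*) [Field Fq] [Fintype Fq] (q : ℕ) (hq : Fintype.card Fq = q)
    (A : Type*) [CommRing A] [IsDomain A] [IsDedekindDomain A] [Algebra Fq A]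
    (K : Type*) [Field K] [Algebra A K] [IsFractionRing A K]
    (Kt : Type*) [Field Kt] [Algebra K Kt] [Algebra A Kt] [IsScalarTower A K Kt]
    (ε : Kt) (hε1 : ε ∉ Set.range (algebraMap K Kt)) (hε2 : ε ^ q ^ 2 = ε)
    (hε3 : ε ^ q ≠ ε) (hgen : Algebra.adjoin K {ε} = ⊤)
    (s t : A) (ht : t ≠ 0) (t' : A)
    (heq : (ε ^ q + algebraMap A Kt s) * (ε + algebraMap A Kt s) =
      algebraMap A Kt t * algebraMap A Kt t') :
    -- (a) `J = tA + (ε + s)A` is an ideal of `Ã`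
    (∀ x ∈ Algebra.adjoin A {ε},
      ∀ j ∈ Submodule.span A ({algebraMap A Kt t, ε + algebraMap A Kt s} : Set Kt),
        x * j ∈ Submodule.span A ({algebraMap A Kt t, ε + algebraMap A Kt s} : Set Kt)) ∧
    -- (b) `J` does not depend on the choice of `ε`
    (∀ ε' : Kt, ε' ∉ Set.range (algebraMap K Kt) → ε' ^ q ^ 2 = ε' → ε' ^ q ≠ ε' →
      ∀ s₁ t₁ : A,
        (ε + algebraMap A Kt s) / algebraMap A Kt t =
          (ε' + algebraMap A Kt s₁) / algebraMap A Kt t₁ →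
        Submodule.span A ({algebraMap A Kt t₁, ε' + algebraMap A Kt s₁} : Set Kt) =
          Submodule.span A ({algebraMap A Kt t, ε + algebraMap A Kt s} : Set Kt)) :=
  stmt_8_general Fq q hq A K Kt ε hε1 hε2 s t ht t' heq
end

section
/- Let ω = (ε + s)/t and ω' = (ε + s')/t' be elliptic elements of K̃ \ K (s, t, s', t' ∈ A, t, t' ≠ 0), with associated ideals J_ω = tA + (ε + s)A and J_{ω'} = t'A + (ε + s')A of Ã. Then there exists M ∈ GL₂(A) with M·ω = ω' under the Möbius action if and only if J_ω and J_{ω'} are equivalent ideals of Ã, i.e. there exist nonzero a, b ∈ Ã with a·J_ω = b·J_{ω'}. -/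
open Matrix Polynomial

/-!
Put `L_ω := A·ω + A·1`. As `ω ∉ K`, `(ω, 1)` is an `A`-basis of `L_ω`. For `g ∈ GL₂(A)` the pair
`(aω + b, cω + d)` is another basis, and dividing by `cω + d` gives `L_ω = (cω + d)·L_{g·ω}`.
Conversely, if `L_ω = λ·L_{ω'}` then `(λω', λ)` is a second basis of `L_ω`; the transition matrix
lies in `GL₂(A)` and sends `ω` to `ω'`. Since `J_ω = t·L_ω`, homotheties between the `J`'s are
homotheties between the `L`'s; from `L_ω = λ·L_{ω'}` one takes `a = t'` and `b = tλ`, which lies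
in `Ã` because `λ = λ·1 ∈ L_ω`, so `tλ ∈ J_ω ⊆ Ã`.
-/

open Pointwise Submodule

theorem span_pair_GL_smul {A M : Type*} [CommRing A] [AddCommGroup M] [Module A M]
    (g : GL (Fin 2) A) (x y : M) :
    span A {g 0 0 • x + g 0 1 • y, g 1 0 • x + g 1 1 • y} = span A {x, y} := by
  refine le_antisymm ?_ ?_
  · rw [span_le, Set.insert_subset_iff, Set.singleton_subset_iff]
    exact ⟨mem_span_pair.mpr ⟨_, _, rfl⟩, mem_span_pair.mpr ⟨_, _, rfl⟩⟩
  · set h : Matrix (Fin 2) (Fin 2) A := ↑g⁻¹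
    have hinv : h * g = 1 := Units.inv_mul g
    simp only [← Matrix.ext_iff, Fin.forall_fin_two, mul_apply, Fin.sum_univ_two, one_apply_eq,
      one_apply_ne zero_ne_one, one_apply_ne one_ne_zero] at hinv
    obtain ⟨⟨h00, h01⟩, h10, h11⟩ := hinv
    rw [span_le, Set.insert_subset_iff, Set.singleton_subset_iff]
    exact ⟨mem_span_pair.mpr ⟨h 0 0, h 0 1, by
        linear_combination (norm := module) h00 • x + h01 • y⟩,
      mem_span_pair.mpr ⟨h 1 0, h 1 1, by
        linear_combination (norm := module) h10 • x + h11 • y⟩⟩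

section Field

variable {A L : Type*} [CommRing A] [Field L] [Algebra A L]

theorem mob_denom_ne_zero {ω : L} (hω : LinearIndependent A ![ω, 1]) (g : GL (Fin 2) A) :
    algebraMap A L (g 1 0) * ω + algebraMap A L (g 1 1) ≠ 0 := by
  intro h
  obtain ⟨hc, hd⟩ := LinearIndependent.pair_iff.mp hω _ _ (by simpa [Algebra.smul_def] using h)
  have hdet := (GeneralLinearGroup.det g).isUnit
  rw [GeneralLinearGroup.val_det_apply, det_fin_two, hc, hd] at hdet
  simp only [mul_zero, sub_self, isUnit_zero_iff] at hdet
  simpa using congrArg (algebraMap A L) hdet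

theorem smul_span_mob {ω : L} (hω : LinearIndependent A ![ω, 1]) (g : GL (Fin 2) A) :
    (algebraMap A L (g 1 0) * ω + algebraMap A L (g 1 1)) • span A {mob (g : Matrix _ _ A) ω, 1} =
      span A {ω, 1} := by
  rw [smul_span, Set.smul_set_insert, Set.smul_set_singleton, smul_eq_mul, smul_eq_mul, mob,
    mul_div_cancel₀ _ (mob_denom_ne_zero hω g), mul_one]
  simpa only [Algebra.smul_def, mul_one] using span_pair_GL_smul g ω 1

theorem exists_mob_eq_of_smul_span_eq {ω ω' c : L} (hω : LinearIndependent A ![ω, 1])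
    (hc : c ≠ 0) (h : c • span A {ω', 1} = span A {ω, 1}) :
    ∃ g : GL (Fin 2) A, mob (g : Matrix _ _ A) ω = ω' := by
  have image_mem {z : L} (hz : z ∈ span A {ω', 1}) : c * z ∈ span A {ω, 1} :=
    h ▸ smul_mem_pointwise_smul z c _ hz
  have preimage_mem {z : L} (hz : z ∈ span A {ω, 1}) :
      ∃ x y : A, c * (x • ω' + y • 1) = z := by
    obtain ⟨w, hw, rfl⟩ := (mem_smul_pointwise_iff_exists z c _).mp (h ▸ hz)
    obtain ⟨x, y, rfl⟩ := mem_span_pair.mp hw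
    exact ⟨x, y, rfl⟩
  obtain ⟨p, q, hpq⟩ := mem_span_pair.mp (image_mem (subset_span (Set.mem_insert ω' {1})))
  obtain ⟨r, s, hrs⟩ := mem_span_pair.mp (image_mem (subset_span (Set.mem_insert_of_mem ω' rfl)))
  obtain ⟨p', q', hpq'⟩ := preimage_mem (subset_span (Set.mem_insert ω {1}))
  obtain ⟨r', s', hrs'⟩ := preimage_mem (subset_span (Set.mem_insert_of_mem ω rfl))
  simp only [Algebra.smul_def, mul_one] at hpq hrs hpq' hrs'
  have coeff_eq {x y : A} (hxy : algebraMap A L x * ω + algebraMap A L y = ω) : x = 1 ∧ y = 0 :=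
    hω.eq_of_pair (by simpa [Algebra.smul_def] using hxy)
  have coeff_eq' {x y : A} (hxy : algebraMap A L x * ω + algebraMap A L y = 1) : x = 0 ∧ y = 1 :=
    hω.eq_of_pair (by simpa [Algebra.smul_def] using hxy)
  obtain ⟨h00, h01⟩ := coeff_eq (x := p' * p + q' * r) (y := p' * q + q' * s) (by
    simp only [map_add, map_mul]
    linear_combination algebraMap A L p' * hpq + algebraMap A L q' * hrs + hpq')
  obtain ⟨h10, h11⟩ := coeff_eq' (x := r' * p + s' * r) (y := r' * q + s' * s) (by
    simp only [map_add, map_mul]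
    linear_combination algebraMap A L r' * hpq + algebraMap A L s' * hrs + hrs')
  have hinv : !![p', q'; r', s'] * !![p, q; r, s] = 1 := by
    rw [mul_fin_two, one_fin_two, h00, h01, h10, h11]
  refine ⟨⟨!![p, q; r, s], !![p', q'; r', s'], mul_eq_one_comm.mp hinv, hinv⟩, ?_⟩
  simp only [mob, of_apply, cons_val', cons_val_zero, cons_val_one, empty_val', cons_val_fin_one]
  rw [hpq, hrs, mul_div_cancel_left₀ _ hc]

theorem exists_mob_eq_iff_smul_span_eq {ω ω' : L} (hω : LinearIndependent A ![ω, 1]) :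
    (∃ g : GL (Fin 2) A, mob (g : Matrix _ _ A) ω = ω') ↔
      ∃ c : L, c ≠ 0 ∧ c • span A {ω', 1} = span A {ω, 1} := by
  constructor
  · rintro ⟨g, rfl⟩
    exact ⟨_, mob_denom_ne_zero hω g, smul_span_mob hω g⟩
  · rintro ⟨c, hc, h⟩
    exact exists_mob_eq_of_smul_span_eq hω hc h

theorem algebraMap_injective_of_isFractionRing (A K L : Type*) [CommRing A] [Field K] [Field L]
    [Algebra A K] [IsFractionRing A K] [Algebra K L] [Algebra A L] [IsScalarTower A K L] :
    Function.Injective (algebraMap A L) := by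
  rw [IsScalarTower.algebraMap_eq A K L]
  exact (algebraMap K L).injective.comp (IsFractionRing.injective A K)

theorem linearIndependent_pair_one {K : Type*} [Field K] [Algebra A K] [IsFractionRing A K]
    [Algebra K L] [IsScalarTower A K L] {ω : L} (hω : ω ∉ Set.range (algebraMap K L)) :
    LinearIndependent A ![ω, 1] := by
  have hinj := algebraMap_injective_of_isFractionRing A K L
  refine LinearIndependent.pair_iff.mpr fun x y hxy => ?_
  rw [Algebra.smul_def, Algebra.smul_def, mul_one] at hxy
  by_cases hx : x = 0
  · subst hx
    simp only [map_zero, zero_mul, zero_add] at hxy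
    exact ⟨rfl, (map_eq_zero_iff _ hinj).mp hxy⟩
  · refine absurd ⟨-algebraMap A K y / algebraMap A K x, ?_⟩ hω
    have hx' : algebraMap A L x ≠ 0 := (map_ne_zero_iff _ hinj).mpr hx
    rw [map_div₀, map_neg, ← IsScalarTower.algebraMap_apply, ← IsScalarTower.algebraMap_apply,
      div_eq_iff hx']
    linear_combination -hxy

theorem span_pair_eq_smul_span_div (x : L) {t : L} (ht : t ≠ 0) :
    span A {t, x} = t • span A {x / t, 1} := by
  rw [smul_span, Set.smul_set_insert, Set.smul_set_singleton, smul_eq_mul, smul_eq_mul,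
    mul_div_cancel₀ _ ht, mul_one, Set.pair_comm]

theorem span_pair_le_adjoin (ε : L) (s t : A) :
    span A {algebraMap A L t, ε + algebraMap A L s} ≤
      Subalgebra.toSubmodule (Algebra.adjoin A {ε}) := by
  rw [span_le, Set.insert_subset_iff, Set.singleton_subset_iff]
  exact ⟨Subalgebra.algebraMap_mem _ t,
    add_mem (Algebra.self_mem_adjoin_singleton A ε) (Subalgebra.algebraMap_mem _ s)⟩

theorem add_div_notMem_range {K : Type*} [Field K] [Algebra A K] [Algebra K L]
    [IsScalarTower A K L] {ε : L} (hε : ε ∉ Set.range (algebraMap K L)) (s : A) {t : A}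
    (ht : algebraMap A L t ≠ 0) :
    (ε + algebraMap A L s) / algebraMap A L t ∉ Set.range (algebraMap K L) := by
  rintro ⟨k, hk⟩
  refine hε ⟨algebraMap A K t * k - algebraMap A K s, ?_⟩
  rw [map_sub, map_mul, hk, ← IsScalarTower.algebraMap_apply, ← IsScalarTower.algebraMap_apply,
    mul_div_cancel₀ _ ht, add_sub_cancel_right]

end Field

theorem stmt_9_general
    (A : Type*) [CommRing A]
    (K : Type*) [Field K] [Algebra A K] [IsFractionRing A K]
    (Kt : Type*) [Field Kt] [Algebra K Kt] [Algebra A Kt] [IsScalarTower A K Kt]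
    (ε : Kt) (hε1 : ε ∉ Set.range (algebraMap K Kt))
    (s t s' t' : A) (ht : t ≠ 0) (ht' : t' ≠ 0)
    (ω ω' : Kt) (hω : ω = (ε + algebraMap A Kt s) / algebraMap A Kt t)
    (hω' : ω' = (ε + algebraMap A Kt s') / algebraMap A Kt t') :
    (∃ M : GL (Fin 2) A, mob (↑M : Matrix (Fin 2) (Fin 2) A) ω = ω') ↔
      ∃ a b : Kt, a ∈ Algebra.adjoin A {ε} ∧ b ∈ Algebra.adjoin A {ε} ∧ a ≠ 0 ∧ b ≠ 0 ∧
        (fun x => a * x) ''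
            (Submodule.span A ({algebraMap A Kt t, ε + algebraMap A Kt s} : Set Kt) : Set Kt) =
          (fun x => b * x) ''
            (Submodule.span A ({algebraMap A Kt t', ε + algebraMap A Kt s'} : Set Kt) : Set Kt) := by
  have hinj := algebraMap_injective_of_isFractionRing A K Kt
  have hit : algebraMap A Kt t ≠ 0 := (map_ne_zero_iff _ hinj).mpr ht
  have hit' : algebraMap A Kt t' ≠ 0 := (map_ne_zero_iff _ hinj).mpr ht'
  have hJ : span A {algebraMap A Kt t, ε + algebraMap A Kt s} =
      algebraMap A Kt t • span A {ω, 1} :=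
    hω ▸ span_pair_eq_smul_span_div _ hit
  have hJ' : span A {algebraMap A Kt t', ε + algebraMap A Kt s'} =
      algebraMap A Kt t' • span A {ω', 1} :=
    hω' ▸ span_pair_eq_smul_span_div _ hit'
  have hind : LinearIndependent A ![ω, 1] :=
    linearIndependent_pair_one (K := K) (hω ▸ add_div_notMem_range hε1 s hit)
  have image_mul_eq (a : Kt) (J : Submodule A Kt) :
      (fun x => a * x) '' (J : Set Kt) = ↑(a • J) := by
    rw [coe_pointwise_smul, ← Set.image_smul]
    rfl
  simp_rw [image_mul_eq, SetLike.coe_set_eq, hJ, hJ', smul_smul,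
    exists_mob_eq_iff_smul_span_eq hind]
  constructor
  · rintro ⟨c, hc, hL⟩
    have hc_mem : c ∈ span A {ω, 1} := by
      simpa [← hL] using
        smul_mem_pointwise_smul 1 c (span A {ω', 1}) (subset_span (Set.mem_insert_of_mem ω' rfl))
    have htc_mem : algebraMap A Kt t * c ∈ Algebra.adjoin A {ε} :=
      span_pair_le_adjoin ε s t (hJ ▸ smul_mem_pointwise_smul c _ _ hc_mem)
    refine ⟨algebraMap A Kt t', algebraMap A Kt t * c, Subalgebra.algebraMap_mem _ t', htc_mem,
      hit', mul_ne_zero hit hc, ?_⟩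
    rw [← hL, smul_smul]
    congr 1
    ring
  · rintro ⟨a, b, -, -, ha, hb, h⟩
    refine ⟨(a * algebraMap A Kt t)⁻¹ * (b * algebraMap A Kt t'), by simp [ha, hb, hit, hit'], ?_⟩
    rw [← smul_smul, ← h, inv_smul_smul₀ (mul_ne_zero ha hit)]

/-- **Lemma 2.2.** Two elliptic elements `ω = (ε+s)/t` and `ω' = (ε+s')/t'` are
`GL₂(A)`-equivalent under the Möbius action if and only if their associated ideals
`J_ω = tA + (ε+s)A` and `J_{ω'} = t'A + (ε+s')A` of `Ã` are equivalent, i.e.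
`a·J_ω = b·J_{ω'}` for some nonzero `a, b ∈ Ã`. -/
theorem stmt_9 (Fq : Type*) [Field Fq] [Fintype Fq] (q : ℕ) (hq : Fintype.card Fq = q)
    (A : Type*) [CommRing A] [IsDomain A] [IsDedekindDomain A] [Algebra Fq A]
    (K : Type*) [Field K] [Algebra A K] [IsFractionRing A K]
    (hunits : ∀ u : Aˣ, ∃ α : Fqˣ, algebraMap Fq A (α : Fq) = (u : A))
    (Kt : Type*) [Field Kt] [Algebra K Kt] [Algebra A Kt] [IsScalarTower A K Kt]
    (ε : Kt) (hε1 : ε ∉ Set.range (algebraMap K Kt)) (hε2 : ε ^ q ^ 2 = ε)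
    (hε3 : ε ^ q ≠ ε) (hgen : Algebra.adjoin K {ε} = ⊤)
    (s t s' t' : A) (ht : t ≠ 0) (ht' : t' ≠ 0)
    (hell : ∃ u : A, (ε ^ q + algebraMap A Kt s) * (ε + algebraMap A Kt s) =
      algebraMap A Kt t * algebraMap A Kt u)
    (hell' : ∃ u : A, (ε ^ q + algebraMap A Kt s') * (ε + algebraMap A Kt s') =
      algebraMap A Kt t' * algebraMap A Kt u)
    (ω ω' : Kt) (hω : ω = (ε + algebraMap A Kt s) / algebraMap A Kt t)
    (hω' : ω' = (ε + algebraMap A Kt s') / algebraMap A Kt t') :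
    (∃ M : GL (Fin 2) A, mob (↑M : Matrix (Fin 2) (Fin 2) A) ω = ω') ↔
      ∃ a b : Kt, a ∈ Algebra.adjoin A {ε} ∧ b ∈ Algebra.adjoin A {ε} ∧ a ≠ 0 ∧ b ≠ 0 ∧
        (fun x => a * x) ''
            (Submodule.span A ({algebraMap A Kt t, ε + algebraMap A Kt s} : Set Kt) : Set Kt) =
          (fun x => b * x) ''
            (Submodule.span A ({algebraMap A Kt t', ε + algebraMap A Kt s'} : Set Kt) : Set Kt) :=
  stmt_9_general A K Kt ε hε1 s t s' t' ht ht' ω ω' hω hω'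
end

section
/- Let ω = (ε + s)/t be an elliptic element with (ε^q + s)(ε + s) = t·t', t' ∈ A, and associated ideal J_ω = tA + (ε + s)A of Ã. Then J_ω·σ(J_ω) = t·Ã; consequently, in the ideal class group Cl(Ã), the class of σ(J_ω) is the inverse of the class of J_ω. -/
/-! With `y = ε + s` and `y' = σ y = ε^q + s`, the trace `y + y' = (ε + ε^q) + 2s` and the
discriminant `(y - y')² = (ε - ε^q)²` are fixed by the `q`-Frobenius (because `ε^(q²) = ε`),
so they lie in `𝔽_q ⊆ A`, the discriminant being a nonzero constant. The product
`(t, y)·(t, y')` contains `t²`, `t(y + y')` and `yy' = tt'`, hence `t·((y + y')² - 4yy')`,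
hence `t`; conversely each of its generators is `t` times an element of `A + yA = Ã`. -/

open Polynomial

namespace FiniteField

variable {F L : Type*} [Field F] [Fintype F] [CommRing L] [IsDomain L] [Algebra F L]

theorem mem_range_algebraMap_of_pow_card_eq {x : L} (hx : x ^ Fintype.card F = x) :
    x ∈ Set.range (algebraMap F L) := by
  have hsplits : (X ^ Fintype.card F - X : F[X]).Splits := by
    rw [splits_iff_card_roots, roots_X_pow_card_sub_X, ← Finset.card_def, Finset.card_univ,
      X_pow_card_sub_X_natDegree_eq F Fintype.one_lt_card]
  exact hsplits.mem_range_of_isRoot (X_pow_card_sub_X_ne_zero F Fintype.one_lt_card)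
    (by simp [hx])

theorem add_pow_card_mem_range_algebraMap {ε : L} (hε : ε ^ Fintype.card F ^ 2 = ε) :
    ε + ε ^ Fintype.card F ∈ Set.range (algebraMap F L) := by
  refine mem_range_algebraMap_of_pow_card_eq ?_
  have := map_add (frobeniusAlgHom F L) ε (ε ^ Fintype.card F)
  simp only [coe_frobeniusAlgHom, ← pow_mul, ← sq, hε] at this
  rw [this, add_comm]

theorem sub_pow_card_sq_mem_range_algebraMap {ε : L} (hε : ε ^ Fintype.card F ^ 2 = ε) :
    (ε - ε ^ Fintype.card F) ^ 2 ∈ Set.range (algebraMap F L) := by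
  refine mem_range_algebraMap_of_pow_card_eq ?_
  have := map_sub (frobeniusAlgHom F L) ε (ε ^ Fintype.card F)
  simp only [coe_frobeniusAlgHom, ← pow_mul, ← sq, hε] at this
  rw [← pow_mul, mul_comm, pow_mul, this]
  ring

end FiniteField

theorem FiniteField.exists_add_eq_algebraMap_and_isUnit_discr {F A L : Type*} [Field F]
    [Fintype F] [CommRing A] [Algebra F A] [Field L] [Algebra F L] [Algebra A L]
    [IsScalarTower F A L] (hinj : Function.Injective (algebraMap A L)) {ε : L}
    (hε2 : ε ^ Fintype.card F ^ 2 = ε) (hε3 : ε ^ Fintype.card F ≠ ε) {s t t' : A}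
    (hprod : (ε + algebraMap A L s) * (ε ^ Fintype.card F + algebraMap A L s) =
      algebraMap A L (t * t')) :
    ∃ u : A,
      (ε + algebraMap A L s) + (ε ^ Fintype.card F + algebraMap A L s) = algebraMap A L u ∧
      IsUnit (u ^ 2 - 4 * (t * t')) := by
  obtain ⟨c, hc⟩ := add_pow_card_mem_range_algebraMap (F := F) hε2
  obtain ⟨d, hd⟩ := sub_pow_card_sq_mem_range_algebraMap (F := F) hε2
  rw [IsScalarTower.algebraMap_apply F A L] at hc hd
  have hsum : (ε + algebraMap A L s) + (ε ^ Fintype.card F + algebraMap A L s) =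
      algebraMap A L (algebraMap F A c + 2 * s) := by
    simp only [map_add, map_mul, map_ofNat, hc]
    ring
  refine ⟨_, hsum, ?_⟩
  have hd0 : d ≠ 0 := by
    rintro rfl
    rw [map_zero, map_zero, eq_comm, pow_eq_zero_iff two_ne_zero, sub_eq_zero] at hd
    exact hε3 hd.symm
  convert hd0.isUnit.map (algebraMap F A)
  apply hinj
  simp only [map_sub, map_pow, map_mul, map_ofNat, hd, ← hsum, ← hprod]
  ring

theorem Algebra.adjoin_singleton_add_algebraMap {R A : Type*} [CommRing R] [Ring A] [Algebra R A]
    (x : A) (r : R) : Algebra.adjoin R {x + algebraMap R A r} = Algebra.adjoin R {x} := by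
  apply le_antisymm <;> rw [Algebra.adjoin_le_iff, Set.singleton_subset_iff]
  · exact add_mem (Algebra.self_mem_adjoin_singleton R x) (Subalgebra.algebraMap_mem _ r)
  · simpa using sub_mem (Algebra.self_mem_adjoin_singleton R (x + algebraMap R A r))
      (Subalgebra.algebraMap_mem _ r)

theorem Algebra.toSubmodule_adjoin_singleton_eq_span_pair {R A : Type*} [CommSemiring R]
    [Semiring A] [Algebra R A] {x : A} (hx : x * x ∈ Submodule.span R {1, x}) :
    Subalgebra.toSubmodule (Algebra.adjoin R {x}) = Submodule.span R {1, x} := by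
  set M := Submodule.span R {1, x}
  have hone : (1 : A) ∈ M := Submodule.subset_span (Set.mem_insert _ _)
  have hxM : x ∈ M := Submodule.subset_span (Set.mem_insert_of_mem _ rfl)
  have hmul : M * M ≤ M := by
    rw [Submodule.span_mul_span, Submodule.span_le]
    rintro _ ⟨a, ha, b, hb, rfl⟩
    rcases ha with rfl | rfl <;> rcases hb with rfl | rfl <;> simp [hone, hxM, hx]
  apply le_antisymm
  · exact Algebra.adjoin_singleton_le (S := M.toSubalgebra hone
      fun _ _ hy hz ↦ hmul (Submodule.mul_mem_mul hy hz)) hxM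
  · rw [Submodule.span_le]
    rintro y (rfl | rfl)
    · exact (Algebra.adjoin R {x}).one_mem
    · exact Algebra.self_mem_adjoin_singleton R y

theorem Submodule.span_image_span {R M N : Type*} [Semiring R] [AddCommMonoid M] [Module R M]
    [AddCommMonoid N] [Module R N] (f : M →ₗ[R] N) (s : Set M) :
    span R (f '' span R s) = span R (f '' s) := by
  rw [span_image, span_eq, ← span_image]

section QuadraticNorm

variable {R L : Type*} [CommRing R] [CommRing L] [Algebra R L] {t t' u : R} {y y' : L}

open Submodule

theorem Submodule.algebraMap_mem_span_pair_mul_span_pair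
    (hprod : y * y' = algebraMap R L (t * t')) (hsum : y + y' = algebraMap R L u)
    (hdiscr : IsUnit (u ^ 2 - 4 * (t * t'))) :
    algebraMap R L t ∈ span R {algebraMap R L t, y} * span R {algebraMap R L t, y'} := by
  set P := span R {algebraMap R L t, y} * span R {algebraMap R L t, y'}
  have mem_P {a b : L} (ha : a ∈ ({algebraMap R L t, y} : Set L))
      (hb : b ∈ ({algebraMap R L t, y'} : Set L)) : a * b ∈ P :=
    mul_mem_mul (subset_span ha) (subset_span hb)
  have htu : algebraMap R L (t * u) ∈ P := by
    rw [map_mul, ← hsum, mul_add, mul_comm _ y]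
    exact add_mem (mem_P (by simp) (by simp)) (mem_P (by simp) (by simp))
  have htt' : algebraMap R L (t * t') ∈ P := hprod ▸ mem_P (by simp) (by simp)
  obtain ⟨w, hw⟩ := hdiscr.exists_left_inv
  have ht : algebraMap R L t =
      (w * u) • algebraMap R L (t * u) - (w * (4 * t)) • algebraMap R L (t * t') := by
    simp only [Algebra.smul_def, ← map_mul, ← map_sub]
    congr 1
    linear_combination (-t) * hw
  rw [ht]
  exact sub_mem (smul_mem _ _ htu) (smul_mem _ _ htt')

theorem Submodule.span_pair_mul_span_pair_eq_of_isUnit_discr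
    (hprod : y * y' = algebraMap R L (t * t')) (hsum : y + y' = algebraMap R L u)
    (hdiscr : IsUnit (u ^ 2 - 4 * (t * t'))) :
    span R {algebraMap R L t, y} * span R {algebraMap R L t, y'} =
      span R {algebraMap R L t} * span R {1, y} := by
  have mem_span_one_y (r : R) : algebraMap R L r ∈ span R {1, y} := by
    rw [Algebra.algebraMap_eq_smul_one]
    exact smul_mem _ _ (subset_span (by simp))
  have hy : y ∈ span R {1, y} := subset_span (Set.mem_insert_of_mem _ rfl)
  have hy' : y' ∈ span R {1, y} := by
    rw [show y' = algebraMap R L u - y by rw [← hsum]; ring]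
    exact sub_mem (mem_span_one_y u) hy
  have mem_rhs {z : L} (hz : z ∈ span R {1, y}) :
      algebraMap R L t * z ∈ span R {algebraMap R L t} * span R {1, y} :=
    mul_mem_mul (mem_span_singleton_self _) hz
  apply le_antisymm
  · rw [span_mul_span, span_le]
    rintro _ ⟨a, ha, b, hb, rfl⟩
    dsimp only
    rcases ha with rfl | rfl <;> rcases hb with rfl | rfl
    · exact mem_rhs (mem_span_one_y t)
    · exact mem_rhs hy'
    · rw [mul_comm _ (algebraMap R L t)]
      exact mem_rhs hy
    · rw [hprod, map_mul]
      exact mem_rhs (mem_span_one_y t')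
  · rw [span_mul_span, span_le]
    rintro _ ⟨_, rfl, b, hb, rfl⟩
    dsimp only
    rcases hb with rfl | rfl
    · simpa using algebraMap_mem_span_pair_mul_span_pair hprod hsum hdiscr
    · rw [mul_comm (algebraMap R L t)]
      exact mul_mem_mul (subset_span (by simp)) (subset_span (by simp))

end QuadraticNorm

theorem stmt_12_general (Fq : Type*) [Field Fq] [Fintype Fq] (q : ℕ) (hq : Fintype.card Fq = q)
    (A : Type*) [CommRing A] [Algebra Fq A]
    (K : Type*) [Field K] [Algebra A K] [IsFractionRing A K]
    (Kt : Type*) [Field Kt] [Algebra K Kt] [Algebra A Kt] [IsScalarTower A K Kt]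
    (ε : Kt) (hε2 : ε ^ q ^ 2 = ε)
    (hε3 : ε ^ q ≠ ε)
    (σ : Kt ≃ₐ[K] Kt) (hσ : σ ε = ε ^ q)
    (s t t' : A) (ht : t ≠ 0)
    (heq : (ε ^ q + algebraMap A Kt s) * (ε + algebraMap A Kt s) =
      algebraMap A Kt t * algebraMap A Kt t') :
    -- `J_ω·σ(J_ω) = t·Ã`
    Submodule.span A ({algebraMap A Kt t, ε + algebraMap A Kt s} : Set Kt) *
        Submodule.span A (⇑σ ''
          (Submodule.span A ({algebraMap A Kt t, ε + algebraMap A Kt s} : Set Kt) : Set Kt)) =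
      Submodule.span A ({algebraMap A Kt t} : Set Kt) *
        Subalgebra.toSubmodule (Algebra.adjoin A {ε}) ∧
    -- consequently `[σ(J_ω)] = [J_ω]⁻¹` in `Cl(Ã)`: the product `J_ω·σ(J_ω)` is
    -- equivalent to the unit ideal `Ã`
    ∃ a b : Kt, a ∈ Algebra.adjoin A {ε} ∧ b ∈ Algebra.adjoin A {ε} ∧ a ≠ 0 ∧ b ≠ 0 ∧
      (fun x => a * x) ''
          ((Submodule.span A ({algebraMap A Kt t, ε + algebraMap A Kt s} : Set Kt) *
            Submodule.span A (⇑σ ''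
              (Submodule.span A
                ({algebraMap A Kt t, ε + algebraMap A Kt s} : Set Kt) : Set Kt)) :
            Submodule A Kt) : Set Kt) =
        (fun x => b * x) '' ((Algebra.adjoin A {ε} : Subalgebra A Kt) : Set Kt) := by
  subst hq
  let _ : Algebra Fq Kt := ((algebraMap A Kt).comp (algebraMap Fq A)).toAlgebra
  have _ : IsScalarTower Fq A Kt := IsScalarTower.of_algebraMap_eq' rfl
  have hinj : Function.Injective (algebraMap A Kt) := by
    rw [IsScalarTower.algebraMap_eq A K Kt]
    exact (algebraMap K Kt).injective.comp (IsFractionRing.injective A K)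
  set f := algebraMap A Kt
  set y := ε + f s
  set y' := ε ^ Fintype.card Fq + f s
  have hprod : y * y' = f (t * t') := by rw [map_mul, ← heq, mul_comm]
  obtain ⟨u, hsum, hdiscr⟩ :=
    FiniteField.exists_add_eq_algebraMap_and_isUnit_discr (F := Fq) hinj hε2 hε3 hprod
  have hσJ : Submodule.span A (σ '' Submodule.span A {f t, y}) = Submodule.span A {f t, y'} := by
    change Submodule.span A ((σ.toAlgHom.restrictScalars A).toLinearMap '' _) = _
    rw [Submodule.span_image_span, Set.image_pair]
    simp [y, y', hσ, f, IsScalarTower.algebraMap_apply A K Kt]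
  have hadjoin : Subalgebra.toSubmodule (Algebra.adjoin A {ε}) = Submodule.span A {1, y} := by
    rw [← Algebra.adjoin_singleton_add_algebraMap ε s]
    refine Algebra.toSubmodule_adjoin_singleton_eq_span_pair
      (Submodule.mem_span_pair.2 ⟨-(t * t'), u, ?_⟩)
    rw [Algebra.smul_def, Algebra.smul_def, ← hsum, map_neg, ← hprod]
    ring
  have hnorm : Submodule.span A {f t, y} * Submodule.span A (σ '' Submodule.span A {f t, y}) =
      Submodule.span A {f t} * Subalgebra.toSubmodule (Algebra.adjoin A {ε}) := by
    rw [hσJ, hadjoin]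
    exact Submodule.span_pair_mul_span_pair_eq_of_isUnit_discr hprod hsum hdiscr
  refine ⟨hnorm, 1, f t, one_mem _, Subalgebra.algebraMap_mem _ t, one_ne_zero,
    (map_ne_zero_iff f hinj).2 ht, ?_⟩
  open Pointwise in
  rw [hnorm, Submodule.span_singleton_mul, Submodule.coe_pointwise_smul]
  simp only [← smul_eq_mul, Set.image_smul, one_smul, Set.image_id']
  rfl

/-- **Lemma (Section 2).** For an elliptic element `ω = (ε+s)/t` with
`(ε^q+s)(ε+s) = t·t'`, the associated ideal `J_ω = tA + (ε+s)A` of `Ã` satisfies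
`J_ω·σ(J_ω) = t·Ã`; consequently in `Cl(Ã)` the class of `σ(J_ω)` is the inverse of
the class of `J_ω`. -/
theorem stmt_12 (Fq : Type*) [Field Fq] [Fintype Fq] (q : ℕ) (hq : Fintype.card Fq = q)
    (A : Type*) [CommRing A] [IsDomain A] [IsDedekindDomain A] [Algebra Fq A]
    (K : Type*) [Field K] [Algebra A K] [IsFractionRing A K]
    (Kt : Type*) [Field Kt] [Algebra K Kt] [Algebra A Kt] [IsScalarTower A K Kt]
    (ε : Kt) (hε1 : ε ∉ Set.range (algebraMap K Kt)) (hε2 : ε ^ q ^ 2 = ε)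
    (hε3 : ε ^ q ≠ ε) (hgen : Algebra.adjoin K {ε} = ⊤)
    (σ : Kt ≃ₐ[K] Kt) (hσ : σ ε = ε ^ q)
    (hAt : Algebra.adjoin A {ε} = integralClosure A Kt)
    (s t t' : A) (ht : t ≠ 0)
    (heq : (ε ^ q + algebraMap A Kt s) * (ε + algebraMap A Kt s) =
      algebraMap A Kt t * algebraMap A Kt t') :
    -- `J_ω·σ(J_ω) = t·Ã`
    Submodule.span A ({algebraMap A Kt t, ε + algebraMap A Kt s} : Set Kt) *
        Submodule.span A (⇑σ ''
          (Submodule.span A ({algebraMap A Kt t, ε + algebraMap A Kt s} : Set Kt) : Set Kt)) =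
      Submodule.span A ({algebraMap A Kt t} : Set Kt) *
        Subalgebra.toSubmodule (Algebra.adjoin A {ε}) ∧
    -- consequently `[σ(J_ω)] = [J_ω]⁻¹` in `Cl(Ã)`: the product `J_ω·σ(J_ω)` is
    -- equivalent to the unit ideal `Ã`
    ∃ a b : Kt, a ∈ Algebra.adjoin A {ε} ∧ b ∈ Algebra.adjoin A {ε} ∧ a ≠ 0 ∧ b ≠ 0 ∧
      (fun x => a * x) ''
          ((Submodule.span A ({algebraMap A Kt t, ε + algebraMap A Kt s} : Set Kt) *
            Submodule.span A (⇑σ ''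
              (Submodule.span A
                ({algebraMap A Kt t, ε + algebraMap A Kt s} : Set Kt) : Set Kt)) :
            Submodule A Kt) : Set Kt) =
        (fun x => b * x) '' ((Algebra.adjoin A {ε} : Subalgebra A Kt) : Set Kt) :=
  stmt_12_general Fq q hq A K Kt ε hε2 hε3 σ hσ s t t' ht heq
end

section
/- If M ∈ GL₂(A) has finite order, then the trace of M lies in the image of 𝔽_q and the determinant of M lies in the image of 𝔽_q^×; consequently the characteristic polynomial of M splits over 𝔽_{q²}, i.e. every root λ of the characteristic polynomial of M in an algebraic closure of the fraction field of A satisfies λ^{q²} = λ. -/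
/-!
After extending scalars to an algebraically closed field, the eigenvalues of a matrix of finite
order are roots of unity, hence integral over `𝔽_q`; so are their sum, the trace, and their
product, the determinant, which therefore come from `𝔽_q`. An eigenvalue of a `2 × 2` matrix is
then a root of a quadratic over `𝔽_q`, whose two roots the Frobenius `x ↦ x ^ q` permutes.
-/

open Matrix Polynomial

namespace Matrix

variable {n : Type*} [Fintype n] [DecidableEq n]

theorem pow_eq_one_of_isRoot_charpoly {K : Type*} [Field K] {N : Matrix n n K} {k : ℕ}
    (hN : N ^ k = 1) {lam : K} (h : N.charpoly.IsRoot lam) : lam ^ k = 1 := by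
  cases isEmpty_or_nonempty n
  · simp [charpoly_isEmpty] at h
  · simpa [hN, spectrum.one_eq] using
      spectrum.pow_mem_pow N k (mem_spectrum_of_isRoot_charpoly h)

theorem isIntegral_of_mem_roots_charpoly {R K : Type*} [CommRing R] [Field K] [Algebra R K]
    {N : Matrix n n K} (hN : IsOfFinOrder N) {lam : K} (h : lam ∈ N.charpoly.roots) :
    IsIntegral R lam := by
  obtain ⟨k, hk, hNk⟩ := hN.exists_pow_eq_one
  refine IsIntegral.of_pow hk ?_
  rw [pow_eq_one_of_isRoot_charpoly hNk (isRoot_of_mem_roots h)]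
  exact isIntegral_one

variable {R A L : Type*} [CommRing R] [CommRing A] [Field L] [IsAlgClosed L]
  [Algebra R A] [Algebra A L] [Algebra R L] [IsScalarTower R A L]

theorem isIntegral_trace_of_isOfFinOrder (hAL : Function.Injective (algebraMap A L))
    {M : Matrix n n A} (hM : IsOfFinOrder M) : IsIntegral R M.trace := by
  rw [← isIntegral_algebraMap_iff hAL, AddMonoidHom.map_trace, trace_eq_sum_roots_charpoly]
  have hML : IsOfFinOrder (M.map (algebraMap A L)) := (algebraMap A L).mapMatrix.isOfFinOrder hM
  exact IsIntegral.multiset_sum fun _ hx ↦ isIntegral_of_mem_roots_charpoly hML hx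

theorem isIntegral_det_of_isOfFinOrder (hAL : Function.Injective (algebraMap A L))
    {M : Matrix n n A} (hM : IsOfFinOrder M) : IsIntegral R M.det := by
  rw [← isIntegral_algebraMap_iff hAL, RingHom.map_det, det_eq_prod_roots_charpoly]
  have hML : IsOfFinOrder (M.map (algebraMap A L)) := (algebraMap A L).mapMatrix.isOfFinOrder hM
  exact IsIntegral.multiset_prod fun _ hx ↦ isIntegral_of_mem_roots_charpoly hML hx

end Matrix

theorem FiniteField.pow_card_sq_of_aeval_quadratic {F L : Type*} [Field F] [Fintype F]
    [CommRing L] [IsDomain L] [Algebra F L] {a b : F} {x : L}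
    (hx : aeval x (X ^ 2 - C a * X + C b) = 0) : x ^ Fintype.card F ^ 2 = x := by
  set σ := frobeniusAlgHom F L
  have hσx : aeval (σ x) (X ^ 2 - C a * X + C b) = 0 := by
    rw [aeval_algHom_apply, hx, map_zero]
  simp only [map_add, map_sub, map_mul, map_pow, aeval_X, aeval_C] at hx hσx
  have hσσ : σ (σ x) = x ^ Fintype.card F ^ 2 := by
    simp only [σ, coe_frobeniusAlgHom, ← pow_mul, sq]
  rw [← hσσ]
  -- `σ x` is a root as well, so it is either `x` or the other root `a - x`
  have : (σ x - x) * (σ x + x - algebraMap F L a) = 0 := by linear_combination hσx - hx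
  rcases mul_eq_zero.mp this with h | h
  · rw [sub_eq_zero.mp h, sub_eq_zero.mp h]
  · rw [show σ x = algebraMap F L a - x by linear_combination h, map_sub, AlgHom.commutes]
    linear_combination -h

theorem stmt_14_general (Fq : Type*) [Field Fq] [Fintype Fq] (q : ℕ) (hq : Fintype.card Fq = q)
    (A : Type*) [CommRing A] [IsDomain A] [Algebra Fq A]
    (halg : ∀ a : A, IsAlgebraic Fq a → ∃ α : Fq, algebraMap Fq A α = a)
    (K : Type*) [Field K] [Algebra A K] [IsFractionRing A K]
    (L : Type*) [Field L] [Algebra K L] [IsAlgClosed L]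
    [Algebra A L] [IsScalarTower A K L]
    (M : GL (Fin 2) A) (hM : IsOfFinOrder M) :
    (∃ α : Fq, algebraMap Fq A α = (↑M : Matrix (Fin 2) (Fin 2) A).trace) ∧
      (∃ β : Fqˣ, algebraMap Fq A (β : Fq) = (↑M : Matrix (Fin 2) (Fin 2) A).det) ∧
      ∀ lam : L, Polynomial.aeval lam (↑M : Matrix (Fin 2) (Fin 2) A).charpoly = 0 →
        lam ^ q ^ 2 = lam := by
  let _ : Algebra Fq L := ((algebraMap A L).comp (algebraMap Fq A)).toAlgebra
  have : IsScalarTower Fq A L := .of_algebraMap_eq fun _ ↦ rfl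
  have hAL : Function.Injective (algebraMap A L) := by
    rw [IsScalarTower.algebraMap_eq A K L]
    exact (algebraMap K L).injective.comp (IsFractionRing.injective A K)
  have hMfin : IsOfFinOrder (M : Matrix (Fin 2) (Fin 2) A) := Units.isOfFinOrder_val.mpr hM
  obtain ⟨α, hα⟩ := halg _ (isIntegral_trace_of_isOfFinOrder (R := Fq) hAL hMfin).isAlgebraic
  obtain ⟨δ, hδ⟩ := halg _ (isIntegral_det_of_isOfFinOrder (R := Fq) hAL hMfin).isAlgebraic
  have hδ0 : δ ≠ 0 := by
    rintro rfl
    exact (isUnits_det_units M).ne_zero (by rw [← hδ, map_zero])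
  refine ⟨⟨α, hα⟩, ⟨Units.mk0 δ hδ0, hδ⟩, fun lam hlam ↦ ?_⟩
  rw [charpoly_fin_two, ← hα, ← hδ] at hlam
  rw [← hq]
  apply FiniteField.pow_card_sq_of_aeval_quadratic (a := α) (b := δ)
  simpa [aeval_C, IsScalarTower.algebraMap_apply Fq A L] using hlam

/-- **Lemma 3.2.** If `M ∈ GL₂(A)` has finite order, then its trace lies in the image of
`𝔽_q`, its determinant lies in the image of `𝔽_q^×`, and every root of its characteristic
polynomial in an algebraic closure of the fraction field of `A` satisfies `λ^{q²} = λ`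
(i.e. the characteristic polynomial splits over `𝔽_{q²}`). -/
theorem stmt_14 (Fq : Type*) [Field Fq] [Fintype Fq] (q : ℕ) (hq : Fintype.card Fq = q)
    (A : Type*) [CommRing A] [IsDomain A] [Algebra Fq A]
    (halg : ∀ a : A, IsAlgebraic Fq a → ∃ α : Fq, algebraMap Fq A α = a)
    (K : Type*) [Field K] [Algebra A K] [IsFractionRing A K]
    (L : Type*) [Field L] [Algebra K L] [IsAlgClosed L] [Algebra.IsAlgebraic K L]
    [Algebra A L] [IsScalarTower A K L]
    (M : GL (Fin 2) A) (hM : IsOfFinOrder M) :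
    (∃ α : Fq, algebraMap Fq A α = (↑M : Matrix (Fin 2) (Fin 2) A).trace) ∧
      (∃ β : Fqˣ, algebraMap Fq A (β : Fq) = (↑M : Matrix (Fin 2) (Fin 2) A).det) ∧
      ∀ lam : L, Polynomial.aeval lam (↑M : Matrix (Fin 2) (Fin 2) A).charpoly = 0 →
        lam ^ q ^ 2 = lam :=
  stmt_14_general Fq q hq A halg K L M hM
end

section
/- Let H be a finite 𝔽_q-saturated subgroup of GL₂(L) such that: Ẑ ⊆ H; every M ∈ H has trace in 𝔽_q and determinant in 𝔽_q^×; and every upper-triangular and every lower-triangular matrix belonging to H is diagonal. Then either H = Ẑ, or H is isomorphic as a group to GL₂(𝔽_q), in which case |H| = q(q−1)²(q+1). (This is the algebraic core of Proposition 3.4/Theorem B(b): the stabilizer of the image vertex of an elliptic point is either 𝔽_{q²}^× or GL₂(𝔽_q).) -/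
open Matrix Polynomial

/-!
Testing the traces of `M · diag(t, t^q)`, `t ∈ 𝔽_{q²}^×`, against `𝔽_q` forces every `M ∈ H` to
have diagonal `(a, a^q)` with `a ∈ 𝔽_{q²}`, because the characters `t ↦ t` and `t ↦ t^q` of
`𝔽_{q²}` are linearly independent. If all elements of `H` are diagonal this gives `H = Ẑ`.
Otherwise, subtracting its diagonal part from an element of `H` and using saturation yields an
antidiagonal element of `H`; rescaling it by `Ẑ` (the norm `𝔽_{q²}^× → 𝔽_q^×` is onto) gives
`J = [[0, b], [b⁻¹, 0]] ∈ H`. The trace test applied to `M J` then shows that `H` consists of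
invertible matrices `[[a, b β], [b⁻¹ β^q, a^q]]` with `a, β ∈ 𝔽_{q²}`, and saturation, applied to
`diag(a, a^q) + diag(β, β^q) J`, shows that it contains all of them. These matrices multiply like
the `𝔽_q`-linear maps `x ↦ a x + β x^q` of `𝔽_{q²}`, which exhaust `End_{𝔽_q}(𝔽_{q²}) ≅ M₂(𝔽_q)`
by a dimension count; hence `H ≅ GL₂(𝔽_q)`.
-/

namespace FiniteField

variable {K : Type*} [Field K] [Fintype K]

theorem exists_algebraMap_eq_of_pow_card_eq_self {L : Type*} [Field L] [Algebra K L] {x : L}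
    (hx : x ^ Fintype.card K = x) : ∃ s : K, algebraMap K L s = x := by
  have hroots := roots_map_of_injective_of_card_eq_natDegree (algebraMap K L).injective
    (p := X ^ Fintype.card K - X) (by
      rw [roots_X_pow_card_sub_X, X_pow_card_sub_X_natDegree_eq K Fintype.one_lt_card]; rfl)
  have hx' : x ∈ ((X ^ Fintype.card K - X : K[X]).map (algebraMap K L)).roots := by
    rw [mem_roots ((Polynomial.map_ne_zero_iff (algebraMap K L).injective).mpr
      (X_pow_card_sub_X_ne_zero K Fintype.one_lt_card))]
    simp [hx]
  rw [← hroots, roots_X_pow_card_sub_X] at hx'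
  simpa using hx'

theorem exists_pow_ne_self {n : ℕ} (hn : 1 < n) (hlt : n < Fintype.card K) :
    ∃ g : K, g ^ n ≠ g := by
  by_contra! h
  have := card_le_degree_of_subset_roots (p := (X ^ n - X : K[X])) (Z := Finset.univ)
    fun x _ ↦ by
      rw [mem_roots (X_pow_card_sub_X_ne_zero K hn)]
      simp [h x]
  rw [X_pow_card_sub_X_natDegree_eq K hn, Finset.card_univ] at this
  omega

theorem exists_mul_pow_eq_of_pow_eq_self {K' : Type*} [Field K'] [Fintype K'] [Algebra K K']
    {q : ℕ} (hq : Fintype.card K = q) (hq2 : Fintype.card K' = q ^ 2) {y : K'} (hy : y ^ q = y) :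
    ∃ x : K', x * x ^ q = y := by
  obtain ⟨s, rfl⟩ := exists_algebraMap_eq_of_pow_card_eq_self (K := K) (hq ▸ hy)
  obtain ⟨x, rfl⟩ := norm_surjective K K' s
  have hq1 : 1 < q := hq ▸ Fintype.one_lt_card
  have hexp : (q ^ 2 - 1) / (q - 1) = q + 1 :=
    Nat.div_eq_of_eq_mul_left (by omega) <| by
      zify [hq1.le, Nat.one_le_pow 2 q (by omega)]; ring
  refine ⟨x, ?_⟩
  rw [algebraMap_norm_eq_pow, Nat.card_eq_fintype_card, Nat.card_eq_fintype_card, hq, hq2, hexp,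
    pow_succ, mul_comm]

end FiniteField

theorem Matrix.card_GL_fin_two {K : Type*} [Field K] [Fintype K] {q : ℕ}
    (hq : Fintype.card K = q) : Nat.card (GL (Fin 2) K) = q * (q - 1) ^ 2 * (q + 1) := by
  have hq1 : 1 ≤ q := hq ▸ Fintype.card_pos
  rw [card_GL_field, hq, Fin.prod_univ_two]
  simp only [Fin.val_zero, Fin.val_one, pow_zero, pow_one]
  zify [hq1, Nat.one_le_pow 2 q (by omega), Nat.le_self_pow two_ne_zero q]
  ring

section Frobenius

variable {K R : Type*} [Field K] [Fintype K] [CommRing R] [Algebra K R] {q : ℕ}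

theorem add_pow_of_card_eq (hq : Fintype.card K = q) (x y : R) :
    (x + y) ^ q = x ^ q + y ^ q :=
  hq ▸ map_add (FiniteField.frobeniusAlgHom K R) x y

theorem sub_pow_of_card_eq (hq : Fintype.card K = q) (x y : R) :
    (x - y) ^ q = x ^ q - y ^ q :=
  hq ▸ map_sub (FiniteField.frobeniusAlgHom K R) x y

theorem neg_pow_of_card_eq (hq : Fintype.card K = q) (x : R) : (-x) ^ q = -x ^ q :=
  hq ▸ map_neg (FiniteField.frobeniusAlgHom K R) x

theorem algebraMap_pow_of_card_eq (hq : Fintype.card K = q) (s : K) :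
    algebraMap K R s ^ q = algebraMap K R s :=
  hq ▸ (FiniteField.frobeniusAlgHom K R).commutes s

theorem pow_pow_of_card_eq_sq {F : Type*} [Field F] [Fintype F] (hF : Fintype.card F = q ^ 2)
    (x : F) : (x ^ q) ^ q = x := by
  rw [← pow_mul, ← sq, ← hF, FiniteField.pow_card]

end Frobenius

section

variable {Fq Fq2 L : Type*} [Field Fq] [Field Fq2] [Field L] [Algebra Fq2 L] {q : ℕ}

theorem eq_pow_of_forall_pow_eq_self [Fintype Fq] [Fintype Fq2] [Algebra Fq L]
    (hq : Fintype.card Fq = q) (hq2 : Fintype.card Fq2 = q ^ 2) {u v : L}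
    (h : ∀ t : Fq2, t ≠ 0 → (u * algebraMap Fq2 L t + v * algebraMap Fq2 L t ^ q) ^ q =
      u * algebraMap Fq2 L t + v * algebraMap Fq2 L t ^ q) :
    v = u ^ q ∧ u = v ^ q := by
  have hq1 : 1 < q := hq ▸ Fintype.one_lt_card
  obtain ⟨g, hg⟩ := FiniteField.exists_pow_ne_self (K := Fq2) hq1 (by rw [hq2]; nlinarith)
  have hfix : ∀ t : Fq2, t ≠ 0 → u ^ q * algebraMap Fq2 L t ^ q + v ^ q * algebraMap Fq2 L t =
      u * algebraMap Fq2 L t + v * algebraMap Fq2 L t ^ q := fun t ht ↦ by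
    simpa only [add_pow_of_card_eq hq, mul_pow, ← map_pow, pow_pow_of_card_eq_sq hq2] using h t ht
  have h1 := hfix 1 one_ne_zero
  have hg' := hfix g (by rintro rfl; exact hg (zero_pow (by omega)))
  simp only [map_one, one_pow, mul_one] at h1
  set γ := algebraMap Fq2 L g
  have hsep : γ ^ q - γ ≠ 0 := by
    rw [sub_ne_zero, ← map_pow]
    exact fun h ↦ hg ((algebraMap Fq2 L).injective h)
  have hv : (v - u ^ q) * (γ ^ q - γ) = 0 := by linear_combination γ * h1 - hg'
  have hu : (u - v ^ q) * (γ ^ q - γ) = 0 := by linear_combination hg' - γ ^ q * h1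
  exact ⟨sub_eq_zero.mp ((mul_eq_zero.mp hv).resolve_right hsep),
    sub_eq_zero.mp ((mul_eq_zero.mp hu).resolve_right hsep)⟩

section TwistedMatrix

variable (L) in
def frobDiag (q : ℕ) (t : Fq2) : Matrix (Fin 2) (Fin 2) L :=
  diagonal ![algebraMap Fq2 L t, algebraMap Fq2 L (t ^ q)]

def twistedMatrix (q : ℕ) (b : Lˣ) (p : Fq2 × Fq2) : Matrix (Fin 2) (Fin 2) L :=
  !![algebraMap Fq2 L p.1, b * algebraMap Fq2 L p.2;
    ↑b⁻¹ * algebraMap Fq2 L (p.2 ^ q), algebraMap Fq2 L (p.1 ^ q)]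

variable (q) in
def twistedMul (p p' : Fq2 × Fq2) : Fq2 × Fq2 :=
  (p.1 * p'.1 + p.2 * p'.2 ^ q, p.1 * p'.2 + p.2 * p'.1 ^ q)

theorem twistedMatrix_one_zero (hq : q ≠ 0) (b : Lˣ) :
    twistedMatrix q b ((1, 0) : Fq2 × Fq2) = 1 := by
  ext i j
  fin_cases i <;> fin_cases j <;> simp [twistedMatrix, hq]

theorem twistedMatrix_injective (b : Lˣ) :
    Function.Injective (twistedMatrix (Fq2 := Fq2) q b) := by
  intro p p' h
  have h00 := congrFun (congrFun h 0) 0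
  have h01 := congrFun (congrFun h 0) 1
  simp only [twistedMatrix, of_apply, cons_val', cons_val_zero, cons_val_one, empty_val',
    cons_val_fin_one, mul_right_inj' b.ne_zero] at h00 h01
  exact Prod.ext ((algebraMap Fq2 L).injective h00) ((algebraMap Fq2 L).injective h01)

theorem det_twistedMatrix (b : Lˣ) (p : Fq2 × Fq2) :
    (twistedMatrix q b p).det = algebraMap Fq2 L (p.1 * p.1 ^ q - p.2 * p.2 ^ q) := by
  have := b.ne_zero
  simp only [twistedMatrix, det_fin_two_of, Units.val_inv_eq_inv_val, map_pow, map_sub, map_mul]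
  field_simp

theorem twistedMatrix_eq_frobDiag_add (hq : q ≠ 0) (b : Lˣ) (a β : Fq2) :
    twistedMatrix q b (a, β) =
      frobDiag L q a + frobDiag L q β * twistedMatrix q b ((0, 1) : Fq2 × Fq2) := by
  ext i j
  fin_cases i <;> fin_cases j <;> simp [twistedMatrix, frobDiag, hq, mul_comm]

end TwistedMatrix

section TwistedEnd

variable [Fintype Fq] [Algebra Fq Fq2]

variable (Fq) in
def twistedEnd : Fq2 × Fq2 →ₗ[Fq] Module.End Fq Fq2 :=
  (LinearMap.mul Fq Fq2).coprod
    ((LinearMap.mul Fq Fq2).compl₂ (FiniteField.frobeniusAlgHom Fq Fq2).toLinearMap)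

theorem twistedEnd_apply (hq : Fintype.card Fq = q) (p : Fq2 × Fq2) (x : Fq2) :
    twistedEnd Fq p x = p.1 * x + p.2 * x ^ q := by
  subst hq; rfl

theorem twistedEnd_one_zero : twistedEnd Fq ((1, 0) : Fq2 × Fq2) = 1 := by
  ext; simp [twistedEnd]

variable [Fintype Fq2]

theorem twistedMatrix_mul (hq : Fintype.card Fq = q) (hq2 : Fintype.card Fq2 = q ^ 2) (b : Lˣ)
    (p p' : Fq2 × Fq2) :
    twistedMatrix q b p * twistedMatrix q b p' = twistedMatrix q b (twistedMul q p p') := by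
  have := b.ne_zero
  ext i j
  fin_cases i <;> fin_cases j <;>
    simp [twistedMatrix, twistedMul, mul_apply, add_pow_of_card_eq hq, mul_pow,
      pow_pow_of_card_eq_sq hq2] <;> field_simp <;> ring

theorem det_twistedMatrix_pow (hq : Fintype.card Fq = q) (hq2 : Fintype.card Fq2 = q ^ 2)
    (b : Lˣ) (p : Fq2 × Fq2) : (twistedMatrix q b p).det ^ q = (twistedMatrix q b p).det := by
  rw [det_twistedMatrix, ← map_pow, sub_pow_of_card_eq hq, mul_pow, mul_pow,
    pow_pow_of_card_eq_sq hq2, pow_pow_of_card_eq_sq hq2, mul_comm (p.1 ^ q), mul_comm (p.2 ^ q)]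

theorem twistedEnd_twistedMul (hq : Fintype.card Fq = q) (hq2 : Fintype.card Fq2 = q ^ 2)
    (p p' : Fq2 × Fq2) :
    twistedEnd Fq (twistedMul q p p') = twistedEnd Fq p * twistedEnd Fq p' := by
  ext x
  simp only [Module.End.mul_apply, twistedEnd_apply hq, twistedMul, add_pow_of_card_eq hq,
    mul_pow, pow_pow_of_card_eq_sq hq2]
  ring

theorem twistedEnd_injective (hq : Fintype.card Fq = q) (hq2 : Fintype.card Fq2 = q ^ 2) :
    Function.Injective (twistedEnd Fq (Fq2 := Fq2)) := by
  have hq1 : 1 < q := hq ▸ Fintype.one_lt_card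
  obtain ⟨g, hg⟩ := FiniteField.exists_pow_ne_self (K := Fq2) hq1 (by rw [hq2]; nlinarith)
  rw [← LinearMap.ker_eq_bot, LinearMap.ker_eq_bot']
  rintro ⟨a, β⟩ h
  have h1 := LinearMap.congr_fun h 1
  have hg' := LinearMap.congr_fun h g
  simp only [twistedEnd_apply hq, one_pow, mul_one, LinearMap.zero_apply] at h1 hg'
  have hβ : β * (g ^ q - g) = 0 := by linear_combination hg' - g * h1
  obtain rfl : β = 0 := (mul_eq_zero.mp hβ).resolve_right (sub_ne_zero.mpr hg)
  simpa using h1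

theorem finrank_eq_two (hq : Fintype.card Fq = q) (hq2 : Fintype.card Fq2 = q ^ 2) :
    Module.finrank Fq Fq2 = 2 := by
  have hq1 : 1 < q := hq ▸ Fintype.one_lt_card
  have := Module.card_eq_pow_finrank (K := Fq) (V := Fq2)
  rw [hq, hq2] at this
  exact (Nat.pow_right_injective hq1 this).symm

variable (Fq) in
theorem twistedEnd_bijective (hq : Fintype.card Fq = q) (hq2 : Fintype.card Fq2 = q ^ 2) :
    Function.Bijective (twistedEnd Fq (Fq2 := Fq2)) := by
  have := Module.finite_of_finite Fq (M := Fq2)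
  refine ⟨twistedEnd_injective hq hq2, ?_⟩
  rw [← LinearMap.injective_iff_surjective_of_finrank_eq_finrank]
  · exact twistedEnd_injective hq hq2
  · rw [Module.finrank_prod, Module.finrank_linearMap, finrank_eq_two hq hq2]

noncomputable def twistedRep (hq : Fintype.card Fq = q) (hq2 : Fintype.card Fq2 = q ^ 2)
    (b : Lˣ) : Module.End Fq Fq2 →* Matrix (Fin 2) (Fin 2) L where
  toFun f :=
    twistedMatrix q b ((LinearEquiv.ofBijective _ (twistedEnd_bijective Fq hq hq2)).symm f)
  map_one' := by
    rw [← twistedEnd_one_zero, LinearEquiv.ofBijective_symm_apply_apply,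
      twistedMatrix_one_zero (hq ▸ Fintype.card_ne_zero)]
  map_mul' f g := by
    obtain ⟨p, rfl⟩ := (twistedEnd_bijective Fq hq hq2).2 f
    obtain ⟨p', rfl⟩ := (twistedEnd_bijective Fq hq hq2).2 g
    simp only [← twistedEnd_twistedMul hq hq2, LinearEquiv.ofBijective_symm_apply_apply,
      twistedMatrix_mul hq hq2]

theorem twistedRep_twistedEnd (hq : Fintype.card Fq = q) (hq2 : Fintype.card Fq2 = q ^ 2)
    (b : Lˣ) (p : Fq2 × Fq2) : twistedRep hq hq2 b (twistedEnd Fq p) = twistedMatrix q b p :=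
  congrArg (twistedMatrix q b) (LinearEquiv.ofBijective_symm_apply_apply _ p)

theorem twistedRep_injective (hq : Fintype.card Fq = q) (hq2 : Fintype.card Fq2 = q ^ 2)
    (b : Lˣ) : Function.Injective (twistedRep (L := L) hq hq2 b) :=
  (twistedMatrix_injective b).comp (LinearEquiv.injective _)

end TwistedEnd

section Subgroup

variable (Fq) in
def IsSaturated [Algebra Fq L] (H : Subgroup (GL (Fin 2) L)) : Prop :=
  ∀ M₁ M₂ : GL (Fin 2) L, M₁ ∈ H → M₂ ∈ H → ∀ α₁ α₂ : Fq,
    (algebraMap Fq L α₁ • (↑M₁ : Matrix (Fin 2) (Fin 2) L) +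
      algebraMap Fq L α₂ • (↑M₂ : Matrix (Fin 2) (Fin 2) L)).det ∈
      Set.range (fun β : Fqˣ => algebraMap Fq L (β : Fq)) →
    ∃ P ∈ H, (↑P : Matrix (Fin 2) (Fin 2) L) =
      algebraMap Fq L α₁ • (↑M₁ : Matrix (Fin 2) (Fin 2) L) +
        algebraMap Fq L α₂ • (↑M₂ : Matrix (Fin 2) (Fin 2) L)

variable (Fq2) in
def ContainsFrobDiag (q : ℕ) (H : Subgroup (GL (Fin 2) L)) : Prop :=
  ∀ t : Fq2, t ≠ 0 → ∀ M : GL (Fin 2) L, ↑M = frobDiag L q t → M ∈ H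

variable (Fq) in
def HasTracesIn [Algebra Fq L] (H : Subgroup (GL (Fin 2) L)) : Prop :=
  ∀ M ∈ H, ∃ α : Fq, algebraMap Fq L α = (↑M : Matrix (Fin 2) (Fin 2) L).trace

variable [Algebra Fq L] {H : Subgroup (GL (Fin 2) L)}

theorem IsSaturated.exists_coe_eq_add_smul [Fintype Fq] (hsat : IsSaturated Fq H)
    (hq : Fintype.card Fq = q) {M₁ M₂ : GL (Fin 2) L} (h₁ : M₁ ∈ H) (h₂ : M₂ ∈ H) (α : Fq)
    (hdet : (M₁.1 + algebraMap Fq L α • M₂.1).det ^ q = (M₁.1 + algebraMap Fq L α • M₂.1).det)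
    (hdet0 : (M₁.1 + algebraMap Fq L α • M₂.1).det ≠ 0) :
    ∃ P ∈ H, P.1 = M₁.1 + algebraMap Fq L α • M₂.1 := by
  obtain ⟨s, hs⟩ := FiniteField.exists_algebraMap_eq_of_pow_card_eq_self (K := Fq) (hq ▸ hdet)
  have hs0 : s ≠ 0 := by rintro rfl; exact hdet0 (by rw [← hs, map_zero])
  have := hsat M₁ M₂ h₁ h₂ 1 α
  rw [map_one, one_smul] at this
  exact this ⟨Units.mk0 s hs0, hs⟩

theorem ContainsFrobDiag.exists_mem (hZ : ContainsFrobDiag Fq2 q H) (hq : q ≠ 0) {t : Fq2}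
    (ht : t ≠ 0) : ∃ D ∈ H, D.1 = frobDiag L q t := by
  have hdet : (frobDiag L q t).det ≠ 0 := by simp [frobDiag, ht, hq]
  exact ⟨GeneralLinearGroup.mkOfDetNeZero _ hdet, hZ t ht _ rfl, rfl⟩

variable [Fintype Fq] [Fintype Fq2]

theorem exists_algebraMap_eq_diag_of_mem (hq : Fintype.card Fq = q)
    (hq2 : Fintype.card Fq2 = q ^ 2) (hZ : ContainsFrobDiag Fq2 q H) (htr : HasTracesIn Fq H)
    {M : GL (Fin 2) L} (hM : M ∈ H) :
    ∃ a : Fq2, algebraMap Fq2 L a = M.1 0 0 ∧ algebraMap Fq2 L (a ^ q) = M.1 1 1 := by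
  have hq0 : q ≠ 0 := hq ▸ Fintype.card_ne_zero
  obtain ⟨h11, h00⟩ := eq_pow_of_forall_pow_eq_self hq hq2 (u := M.1 0 0) (v := M.1 1 1)
    fun t ht ↦ by
      obtain ⟨D, hD, hDt⟩ := hZ.exists_mem hq0 ht
      obtain ⟨s, hs⟩ := htr _ (H.mul_mem hM hD)
      have htrace : (M * D).1.trace =
          M.1 0 0 * algebraMap Fq2 L t + M.1 1 1 * algebraMap Fq2 L t ^ q := by
        simp [hDt, frobDiag, trace_fin_two]
      rw [← htrace, ← hs, algebraMap_pow_of_card_eq hq]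
  obtain ⟨a, ha⟩ := FiniteField.exists_algebraMap_eq_of_pow_card_eq_self (K := Fq2)
    (x := M.1 0 0) (by rw [hq2, sq, pow_mul, ← h11, ← h00])
  exact ⟨a, ha, by rw [map_pow, ha, h11]⟩

theorem exists_eq_frobDiag_of_mem (hq : Fintype.card Fq = q) (hq2 : Fintype.card Fq2 = q ^ 2)
    (hZ : ContainsFrobDiag Fq2 q H) (htr : HasTracesIn Fq H) {M : GL (Fin 2) L} (hM : M ∈ H)
    (h01 : M.1 0 1 = 0) (h10 : M.1 1 0 = 0) : ∃ a : Fq2, a ≠ 0 ∧ M.1 = frobDiag L q a := by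
  obtain ⟨a, h00, h11⟩ := exists_algebraMap_eq_diag_of_mem hq hq2 hZ htr hM
  have hM' : M.1 = frobDiag L q a := by
    ext i j
    fin_cases i <;> fin_cases j <;> simp [frobDiag, h00, h11, h01, h10]
  refine ⟨a, fun ha ↦ M.isUnit.ne_zero ?_, hM'⟩
  rw [hM', ha]
  ext i j
  fin_cases i <;> fin_cases j <;> simp [frobDiag, hq ▸ Fintype.card_ne_zero]

theorem exists_algebraMap_eq_apply_zero_one_mul (hq : Fintype.card Fq = q)
    (hq2 : Fintype.card Fq2 = q ^ 2) (hZ : ContainsFrobDiag Fq2 q H) (htr : HasTracesIn Fq H)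
    {M : GL (Fin 2) L} (hM : M ∈ H) :
    ∃ n : Fq2, n ^ q = n ∧ algebraMap Fq2 L n = M.1 0 1 * M.1 1 0 := by
  obtain ⟨a, h00, h11⟩ := exists_algebraMap_eq_diag_of_mem hq hq2 hZ htr hM
  obtain ⟨a', h00', h11'⟩ := exists_algebraMap_eq_diag_of_mem hq hq2 hZ htr (H.mul_mem hM hM)
  simp only [Units.val_mul, mul_apply, Fin.sum_univ_two] at h00' h11'
  refine ⟨a' - a ^ 2, (algebraMap Fq2 L).injective ?_, ?_⟩
  · have hfrob : algebraMap Fq2 L ((a' - a ^ 2) ^ q) =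
        algebraMap Fq2 L (a' ^ q) - algebraMap Fq2 L (a ^ q) ^ 2 := by
      simp only [map_pow, map_sub, sub_pow_of_card_eq hq, ← pow_mul, mul_comm]
    rw [hfrob, h11', h11, map_sub, map_pow, h00', h00]
    ring
  · simp only [map_sub, map_pow, h00', h00]
    ring

theorem exists_antidiagonal_mem (hq : Fintype.card Fq = q) (hq2 : Fintype.card Fq2 = q ^ 2)
    (hsat : IsSaturated Fq H) (hZ : ContainsFrobDiag Fq2 q H) (htr : HasTracesIn Fq H)
    {M : GL (Fin 2) L} (hM : M ∈ H) (h01 : M.1 0 1 ≠ 0) (h10 : M.1 1 0 ≠ 0) :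
    ∃ J ∈ H, J.1 = !![0, M.1 0 1; M.1 1 0, 0] := by
  have hq0 : q ≠ 0 := hq ▸ Fintype.card_ne_zero
  obtain ⟨a, h00, h11⟩ := exists_algebraMap_eq_diag_of_mem hq hq2 hZ htr hM
  rcases eq_or_ne a 0 with rfl | ha
  · refine ⟨M, hM, ?_⟩
    ext i j
    fin_cases i <;> fin_cases j <;> simp [← h00, ← h11, hq0]
  obtain ⟨D, hD, hDa⟩ := hZ.exists_mem hq0 ha
  have hJ : M.1 + algebraMap Fq L (-1) • D.1 = !![0, M.1 0 1; M.1 1 0, 0] := by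
    rw [hDa]
    ext i j
    fin_cases i <;> fin_cases j <;> simp [frobDiag, ← h00, ← h11]
  obtain ⟨n, hnq, hn⟩ := exists_algebraMap_eq_apply_zero_one_mul hq hq2 hZ htr hM
  have hdet : (!![0, M.1 0 1; M.1 1 0, 0] : Matrix (Fin 2) (Fin 2) L).det =
      -algebraMap Fq2 L n := by
    simp [det_fin_two_of, hn]
  obtain ⟨J, hJH, hJ'⟩ := hsat.exists_coe_eq_add_smul hq hM hD (-1)
    (by rw [hJ, hdet, neg_pow_of_card_eq hq, ← map_pow, hnq])
    (by rw [hJ, hdet, hn]; simp [h01, h10])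
  exact ⟨J, hJH, hJ'.trans hJ⟩

theorem exists_eq_twistedMatrix_of_mem (hq : Fintype.card Fq = q)
    (hq2 : Fintype.card Fq2 = q ^ 2) (hZ : ContainsFrobDiag Fq2 q H) (htr : HasTracesIn Fq H)
    {b : Lˣ} {J : GL (Fin 2) L} (hJ : J ∈ H)
    (hJb : J.1 = twistedMatrix q b ((0, 1) : Fq2 × Fq2)) {M : GL (Fin 2) L} (hM : M ∈ H) :
    ∃ p : Fq2 × Fq2, M.1 = twistedMatrix q b p := by
  have hq0 : q ≠ 0 := hq ▸ Fintype.card_ne_zero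
  obtain ⟨a, h00, h11⟩ := exists_algebraMap_eq_diag_of_mem hq hq2 hZ htr hM
  obtain ⟨β, h01, h10⟩ := exists_algebraMap_eq_diag_of_mem hq hq2 hZ htr (H.mul_mem hM hJ)
  have e01 : M.1 0 1 = b * algebraMap Fq2 L β := by
    rw [show algebraMap Fq2 L β = M.1 0 1 * ↑b⁻¹ by
      simpa [hJb, twistedMatrix, mul_apply, hq0] using h01, mul_comm, Units.inv_mul_cancel_right]
  have e10 : M.1 1 0 = ↑b⁻¹ * algebraMap Fq2 L (β ^ q) := by
    rw [show algebraMap Fq2 L (β ^ q) = M.1 1 0 * b by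
      simpa [hJb, twistedMatrix, mul_apply, hq0] using h10, mul_comm, Units.mul_inv_cancel_right]
  refine ⟨(a, β), ?_⟩
  ext i j
  fin_cases i <;> fin_cases j <;> simp [twistedMatrix, h00, h11, e01, e10]

variable [Algebra Fq Fq2]

theorem exists_twistedMatrix_zero_one_mem (hq : Fintype.card Fq = q)
    (hq2 : Fintype.card Fq2 = q ^ 2) (hsat : IsSaturated Fq H) (hZ : ContainsFrobDiag Fq2 q H)
    (htr : HasTracesIn Fq H) {M : GL (Fin 2) L} (hM : M ∈ H) (h01 : M.1 0 1 ≠ 0)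
    (h10 : M.1 1 0 ≠ 0) : ∃ b : Lˣ, ∃ J ∈ H, J.1 = twistedMatrix q b ((0, 1) : Fq2 × Fq2) := by
  have hq0 : q ≠ 0 := hq ▸ Fintype.card_ne_zero
  obtain ⟨J₀, hJ₀, hJ₀eq⟩ := exists_antidiagonal_mem hq hq2 hsat hZ htr hM h01 h10
  obtain ⟨n, hnq, hn⟩ := exists_algebraMap_eq_apply_zero_one_mul hq hq2 hZ htr hM
  have hn0 : n ≠ 0 := by
    rintro rfl
    exact mul_ne_zero h01 h10 (by rw [← hn, map_zero])
  -- rescaling `J₀` by `diag(ν, ν^q)` with `ν ν^q = n⁻¹` makes its determinant `-1`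
  obtain ⟨ν, hν⟩ := FiniteField.exists_mul_pow_eq_of_pow_eq_self hq hq2 (y := n⁻¹)
    (by rw [inv_pow, hnq])
  have hν0 : ν ≠ 0 := by
    rintro rfl
    exact inv_ne_zero hn0 (by rw [← hν]; simp [hq0])
  obtain ⟨D, hD, hDν⟩ := hZ.exists_mem hq0 hν0
  refine ⟨Units.mk0 (algebraMap Fq2 L ν * M.1 0 1) (by simp [hν0, h01]), D * J₀,
    H.mul_mem hD hJ₀, ?_⟩
  have hν' : algebraMap Fq2 L ν * algebraMap Fq2 L ν ^ q * (M.1 0 1 * M.1 1 0) = 1 := by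
    rw [← map_pow, ← map_mul, hν, ← hn, ← map_mul, inv_mul_cancel₀ hn0, map_one]
  have hφν : algebraMap Fq2 L ν ≠ 0 := by simpa using hν0
  have hinv : algebraMap Fq2 L ν ^ q * M.1 1 0 = (M.1 0 1)⁻¹ * (algebraMap Fq2 L ν)⁻¹ := by
    field_simp
    linear_combination hν'
  rw [Units.val_mul, hDν, hJ₀eq]
  ext i j
  fin_cases i <;> fin_cases j <;> simp [frobDiag, twistedMatrix, hq0, hinv]

theorem exists_mem_coe_eq_twistedMatrix (hq : Fintype.card Fq = q)
    (hq2 : Fintype.card Fq2 = q ^ 2) (hsat : IsSaturated Fq H) (hZ : ContainsFrobDiag Fq2 q H)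
    {b : Lˣ} {J : GL (Fin 2) L} (hJ : J ∈ H)
    (hJb : J.1 = twistedMatrix q b ((0, 1) : Fq2 × Fq2)) {p : Fq2 × Fq2}
    (hp : (twistedMatrix q b p).det ≠ 0) : ∃ P ∈ H, P.1 = twistedMatrix q b p := by
  have hq0 : q ≠ 0 := hq ▸ Fintype.card_ne_zero
  obtain ⟨a, β⟩ := p
  have hdiag0 : frobDiag L q (0 : Fq2) = 0 := by
    ext i j
    fin_cases i <;> fin_cases j <;> simp [frobDiag, hq0]
  rcases eq_or_ne β 0 with rfl | hβ
  · have ha : a ≠ 0 := by rintro rfl; simp [det_twistedMatrix, hq0] at hp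
    obtain ⟨D, hD, hDa⟩ := hZ.exists_mem hq0 ha
    exact ⟨D, hD, by rw [hDa, twistedMatrix_eq_frobDiag_add hq0, hdiag0, zero_mul, add_zero]⟩
  obtain ⟨Dβ, hDβ, hDβeq⟩ := hZ.exists_mem hq0 hβ
  have hDβJ : (Dβ * J).1 = frobDiag L q β * twistedMatrix q b ((0, 1) : Fq2 × Fq2) := by
    rw [Units.val_mul, hDβeq, hJb]
  rcases eq_or_ne a 0 with rfl | ha
  · refine ⟨Dβ * J, H.mul_mem hDβ hJ, ?_⟩
    rw [hDβJ, twistedMatrix_eq_frobDiag_add hq0 b 0 β, hdiag0, zero_add]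
  obtain ⟨Da, hDa, hDaeq⟩ := hZ.exists_mem hq0 ha
  have hsum : Da.1 + algebraMap Fq L 1 • (Dβ * J).1 = twistedMatrix q b (a, β) := by
    rw [map_one, one_smul, hDaeq, hDβJ, twistedMatrix_eq_frobDiag_add hq0 b a β]
  obtain ⟨P, hP, hPeq⟩ := hsat.exists_coe_eq_add_smul hq hDa (H.mul_mem hDβ hJ) 1
    (by rw [hsum, det_twistedMatrix_pow hq hq2]) (by rwa [hsum])
  exact ⟨P, hP, hPeq.trans hsum⟩

theorem range_units_map_twistedRep (hq : Fintype.card Fq = q)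
    (hq2 : Fintype.card Fq2 = q ^ 2) (hsat : IsSaturated Fq H) (hZ : ContainsFrobDiag Fq2 q H)
    (htr : HasTracesIn Fq H) {b : Lˣ} {J : GL (Fin 2) L} (hJ : J ∈ H)
    (hJb : J.1 = twistedMatrix q b ((0, 1) : Fq2 × Fq2)) :
    (Units.map (twistedRep hq hq2 b)).range = H := by
  ext M
  constructor
  · rintro ⟨u, rfl⟩
    obtain ⟨p, hp⟩ := (twistedEnd_bijective Fq hq hq2).2 u.1
    have hu : (Units.map (twistedRep hq hq2 b) u).1 = twistedMatrix q b p := by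
      rw [Units.coe_map, ← hp, twistedRep_twistedEnd]
    have hdet := (Units.map (twistedRep hq hq2 b) u).isUnit
    rw [isUnit_iff_isUnit_det, hu] at hdet
    obtain ⟨P, hP, hPeq⟩ := exists_mem_coe_eq_twistedMatrix hq hq2 hsat hZ hJ hJb hdet.ne_zero
    rwa [← Units.ext (hPeq.trans hu.symm)]
  · intro hM
    obtain ⟨p, hp⟩ := exists_eq_twistedMatrix_of_mem hq hq2 hZ htr hJ hJb hM
    obtain ⟨p', hp'⟩ := exists_eq_twistedMatrix_of_mem hq hq2 hZ htr hJ hJb (H.inv_mem hM)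
    have hinv : ∀ {N N' : GL (Fin 2) L} {r r' : Fq2 × Fq2}, N.1 = twistedMatrix q b r →
        N'.1 = twistedMatrix q b r' → N * N' = 1 → twistedEnd Fq r * twistedEnd Fq r' = 1 :=
      fun hr hr' h ↦ twistedRep_injective hq hq2 b <| by
        rw [map_mul, map_one, twistedRep_twistedEnd, twistedRep_twistedEnd, ← hr, ← hr',
          ← Units.val_mul, h, Units.val_one]
    refine ⟨⟨twistedEnd Fq p, twistedEnd Fq p', hinv hp hp' (mul_inv_cancel M),
      hinv hp' hp (inv_mul_cancel M)⟩, Units.ext ?_⟩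
    rw [Units.coe_map]
    exact (twistedRep_twistedEnd hq hq2 b p).trans hp.symm

theorem nonempty_mulEquiv_GL (hq : Fintype.card Fq = q) (hq2 : Fintype.card Fq2 = q ^ 2)
    (hsat : IsSaturated Fq H) (hZ : ContainsFrobDiag Fq2 q H) (htr : HasTracesIn Fq H)
    {b : Lˣ} {J : GL (Fin 2) L} (hJ : J ∈ H)
    (hJb : J.1 = twistedMatrix q b ((0, 1) : Fq2 × Fq2)) : Nonempty (H ≃* GL (Fin 2) Fq) :=
  have := Module.finite_of_finite Fq (M := Fq2)
  ⟨(MulEquiv.subgroupCongr (range_units_map_twistedRep hq hq2 hsat hZ htr hJ hJb).symm).trans <|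
    (MonoidHom.ofInjective (Units.map_injective (twistedRep_injective hq hq2 b))).symm.trans <|
      Units.mapEquiv (LinearMap.toMatrixAlgEquiv
        (Module.finBasisOfFinrankEq Fq Fq2 (finrank_eq_two hq hq2))).toMulEquiv⟩

end Subgroup

end

theorem stmt_16_general (Fq Fq2 : Type*) [Field Fq] [Field Fq2] [Fintype Fq] [Fintype Fq2]
    (q : ℕ) (hq : Fintype.card Fq = q) (hq2 : Fintype.card Fq2 = q ^ 2)
    [Algebra Fq Fq2]
    (L : Type*) [Field L] [Algebra Fq2 L] [Algebra Fq L]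
    (H : Subgroup (GL (Fin 2) L))
    -- `H` is `𝔽_q`-saturated
    (hsat : ∀ M₁ M₂ : GL (Fin 2) L, M₁ ∈ H → M₂ ∈ H → ∀ α₁ α₂ : Fq,
      (algebraMap Fq L α₁ • (↑M₁ : Matrix (Fin 2) (Fin 2) L) +
        algebraMap Fq L α₂ • (↑M₂ : Matrix (Fin 2) (Fin 2) L)).det ∈
        Set.range (fun β : Fqˣ => algebraMap Fq L (β : Fq)) →
      ∃ P ∈ H, (↑P : Matrix (Fin 2) (Fin 2) L) =
        algebraMap Fq L α₁ • (↑M₁ : Matrix (Fin 2) (Fin 2) L) +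
          algebraMap Fq L α₂ • (↑M₂ : Matrix (Fin 2) (Fin 2) L))
    -- `Ẑ ⊆ H`
    (hZ : ∀ α : Fq2, α ≠ 0 → ∀ M : GL (Fin 2) L,
      (↑M : Matrix (Fin 2) (Fin 2) L) =
        Matrix.diagonal ![algebraMap Fq2 L α, algebraMap Fq2 L (α ^ q)] → M ∈ H)
    -- traces lie in `𝔽_q` and determinants lie in `𝔽_q^×`
    (htr : ∀ M ∈ H, ∃ α : Fq, algebraMap Fq L α = (↑M : Matrix (Fin 2) (Fin 2) L).trace)
    -- every upper- or lower-triangular matrix in `H` is diagonal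
    (htri : ∀ M ∈ H,
      ((↑M : Matrix (Fin 2) (Fin 2) L) 1 0 = 0 →
        (↑M : Matrix (Fin 2) (Fin 2) L) 0 1 = 0) ∧
      ((↑M : Matrix (Fin 2) (Fin 2) L) 0 1 = 0 →
        (↑M : Matrix (Fin 2) (Fin 2) L) 1 0 = 0)) :
    -- either `H = Ẑ` ...
    (∀ M ∈ H, ∃ α : Fq2, α ≠ 0 ∧ (↑M : Matrix (Fin 2) (Fin 2) L) =
      Matrix.diagonal ![algebraMap Fq2 L α, algebraMap Fq2 L (α ^ q)]) ∨
    -- ... or `H ≅ GL₂(𝔽_q)`, in which case `|H| = q(q−1)²(q+1)`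
    (Nonempty (H ≃* GL (Fin 2) Fq) ∧ Nat.card H = q * (q - 1) ^ 2 * (q + 1)) := by
  by_cases hdiag : ∀ M ∈ H, (↑M : Matrix (Fin 2) (Fin 2) L) 0 1 = 0
  · exact Or.inl fun M hM ↦ exists_eq_frobDiag_of_mem hq hq2 hZ htr hM (hdiag M hM)
      ((htri M hM).2 (hdiag M hM))
  obtain ⟨M, hM, h01⟩ := not_forall₂.mp hdiag
  obtain ⟨b, J, hJ, hJb⟩ := exists_twistedMatrix_zero_one_mem hq hq2 hsat hZ htr hM h01
    fun h10 ↦ h01 ((htri M hM).1 h10)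
  obtain ⟨e⟩ := nonempty_mulEquiv_GL hq hq2 hsat hZ htr hJ hJb
  exact Or.inr ⟨⟨e⟩, (Nat.card_congr e.toEquiv).trans (Matrix.card_GL_fin_two hq)⟩

/-- **Algebraic core of Proposition 3.4 / Theorem B(b).** Let `H` be a finite
`𝔽_q`-saturated subgroup of `GL₂(L)` containing `Ẑ = {diag(α, α^q) : α ∈ 𝔽_{q²}^×}`,
all of whose elements have trace in `𝔽_q` and determinant in `𝔽_q^×`, and whose
triangular elements are all diagonal. Then either `H = Ẑ`, or `H ≅ GL₂(𝔽_q)`, in which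
case `|H| = q(q−1)²(q+1)`. -/
theorem stmt_16 (Fq Fq2 : Type*) [Field Fq] [Field Fq2] [Fintype Fq] [Fintype Fq2]
    (q : ℕ) (hq : Fintype.card Fq = q) (hq2 : Fintype.card Fq2 = q ^ 2)
    [Algebra Fq Fq2]
    (L : Type*) [Field L] [Algebra Fq2 L] [Algebra Fq L] [IsScalarTower Fq Fq2 L]
    (H : Subgroup (GL (Fin 2) L)) [Finite H]
    -- `H` is `𝔽_q`-saturated
    (hsat : ∀ M₁ M₂ : GL (Fin 2) L, M₁ ∈ H → M₂ ∈ H → ∀ α₁ α₂ : Fq,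
      (algebraMap Fq L α₁ • (↑M₁ : Matrix (Fin 2) (Fin 2) L) +
        algebraMap Fq L α₂ • (↑M₂ : Matrix (Fin 2) (Fin 2) L)).det ∈
        Set.range (fun β : Fqˣ => algebraMap Fq L (β : Fq)) →
      ∃ P ∈ H, (↑P : Matrix (Fin 2) (Fin 2) L) =
        algebraMap Fq L α₁ • (↑M₁ : Matrix (Fin 2) (Fin 2) L) +
          algebraMap Fq L α₂ • (↑M₂ : Matrix (Fin 2) (Fin 2) L))
    -- `Ẑ ⊆ H`
    (hZ : ∀ α : Fq2, α ≠ 0 → ∀ M : GL (Fin 2) L,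
      (↑M : Matrix (Fin 2) (Fin 2) L) =
        Matrix.diagonal ![algebraMap Fq2 L α, algebraMap Fq2 L (α ^ q)] → M ∈ H)
    -- traces lie in `𝔽_q` and determinants lie in `𝔽_q^×`
    (htr : ∀ M ∈ H, ∃ α : Fq, algebraMap Fq L α = (↑M : Matrix (Fin 2) (Fin 2) L).trace)
    (hdet : ∀ M ∈ H, ∃ β : Fqˣ,
      algebraMap Fq L (β : Fq) = (↑M : Matrix (Fin 2) (Fin 2) L).det)
    -- every upper- or lower-triangular matrix in `H` is diagonal
    (htri : ∀ M ∈ H,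
      ((↑M : Matrix (Fin 2) (Fin 2) L) 1 0 = 0 →
        (↑M : Matrix (Fin 2) (Fin 2) L) 0 1 = 0) ∧
      ((↑M : Matrix (Fin 2) (Fin 2) L) 0 1 = 0 →
        (↑M : Matrix (Fin 2) (Fin 2) L) 1 0 = 0)) :
    -- either `H = Ẑ` ...
    (∀ M ∈ H, ∃ α : Fq2, α ≠ 0 ∧ (↑M : Matrix (Fin 2) (Fin 2) L) =
      Matrix.diagonal ![algebraMap Fq2 L α, algebraMap Fq2 L (α ^ q)]) ∨
    -- ... or `H ≅ GL₂(𝔽_q)`, in which case `|H| = q(q−1)²(q+1)`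
    (Nonempty (H ≃* GL (Fin 2) Fq) ∧ Nat.card H = q * (q - 1) ^ 2 * (q + 1)) :=
  stmt_16_general Fq Fq2 q hq hq2 L H hsat hZ htr htri
end
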